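/- arXiv:1206.3088 — 9 statements merged into one kernel-verified Lean document; each statement's English description precedes it below -/
import Mathlib

section
/- If |e⟩ ∈ ℂ² and |φ⟩ ∈ (ℂ²)^⊗n are such that the product vector |e⟩⊗|φ⟩ lies in the symmetric subspace S_{n+1} of (ℂ²)^⊗(n+1), and |e⟩ ≠ 0, then |φ⟩ = c·|e⟩^⊗n for some scalar c ∈ ℂ. In particular any product vector lying in S_N has the form |e⟩^⊗N. -/
abbrev QIdx (N : ℕ) := Fin N → Fin 2

/-- A vector on `N` qubits is symmetric iff it is invariant under all permutation
operators `V_σ` (here `(V_σ ψ) f = ψ (f ∘ σ)`). -/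
def SymmVec {N : ℕ} (ψ : QIdx N → ℂ) : Prop :=
  ∀ σ : Equiv.Perm (Fin N), ∀ f : QIdx N, ψ (f ∘ σ) = ψ f

/-- Product vector `e₁ ⊗ ⋯ ⊗ e_N`. -/
def prodVec {N : ℕ} (e : Fin N → (Fin 2 → ℂ)) : QIdx N → ℂ :=
  fun f => ∏ i, e i (f i)

/-- Tensor product of an `a`-qubit vector with a `b`-qubit vector. -/
def tens {a b : ℕ} (ψ : QIdx a → ℂ) (φ : QIdx b → ℂ) : QIdx (a + b) → ℂ :=
  fun f => ψ (fun i => f (Fin.castAdd b i)) * φ (fun j => f (Fin.natAdd a j))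

/-- A vector of `ℂ²` viewed as a one-qubit vector. -/
def oneQ (e : Fin 2 → ℂ) : QIdx 1 → ℂ := fun f => e (f 0)

/-- if `|e⟩ ⊗ |φ⟩` lies in the symmetric subspace `S_{n+1}` and `|e⟩ ≠ 0`,
then `|φ⟩ = c • |e⟩^⊗n` for some scalar `c`. -/
theorem stmt1 (n : ℕ) (e : Fin 2 → ℂ) (he : e ≠ 0) (φ : QIdx n → ℂ)
    (hsym : SymmVec (tens (oneQ e) φ)) :
    ∃ c : ℂ, φ = c • prodVec (fun _ : Fin n => e) := by
  have key : ∀ (g : QIdx n) (j : Fin n) (x y : Fin 2),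
      e x * φ (Function.update g j y) = e y * φ (Function.update g j x) := by
    intro g j x y
    set a : Fin (1 + n) := Fin.castAdd n (0 : Fin 1) with ha
    set b : Fin (1 + n) := Fin.natAdd 1 j with hb
    have hab : a ≠ b := by
      simp only [ha, hb, ne_eq, Fin.ext_iff, Fin.coe_castAdd, Fin.coe_natAdd]
      omega
    set F : Fin (1 + n) → Fin 2 :=
      Fin.addCases (fun _ : Fin 1 => x) (Function.update g j y) with hF
    have h := hsym (Equiv.swap a b) F
    have h1 : F a = x := by simp [hF, ha]
    have h2 : (fun k => F (Fin.natAdd 1 k)) = Function.update g j y := by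
      funext k; simp [hF]
    have h3 : (F ∘ (Equiv.swap a b)) a = y := by
      simp [Function.comp, Equiv.swap_apply_left, hF, hb]
    have h4 : (fun k => (F ∘ (Equiv.swap a b)) (Fin.natAdd 1 k))
        = Function.update g j x := by
      funext k
      by_cases hk : k = j
      · subst hk
        simp [Function.comp, ← hb, Equiv.swap_apply_right, hF, ha]
      · have hne1 : Fin.natAdd 1 k ≠ a := by
          simp [ha, Fin.ext_iff]
        have hne2 : Fin.natAdd 1 k ≠ b := by
          simp [hb, Fin.ext_iff]
          omega
        simp [Function.comp, Equiv.swap_apply_of_ne_of_ne hne1 hne2, hF,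
          Function.update_of_ne hk]
    simp only [tens, oneQ] at h
    rw [← ha] at h
    rw [h1, h2, h3, h4] at h
    exact h.symm
  obtain ⟨x₀, hx₀⟩ := Function.ne_iff.mp he
  simp only [Pi.zero_apply] at hx₀
  refine ⟨φ (fun _ => x₀) / e x₀ ^ n, ?_⟩
  funext g
  have main : ∀ s : Finset (Fin n), e x₀ ^ s.card * φ g =
      (∏ i ∈ s, e (g i)) * φ (fun i => if i ∈ s then x₀ else g i) := by
    intro s
    induction s using Finset.induction_on with
    | empty => simp
    | @insert a s ha ih =>
      set g' : QIdx n := fun i => if i ∈ s then x₀ else g i with hg'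
      have hga : g' a = g a := by simp [hg', ha]
      have hupd : Function.update g' a x₀ = fun i => if i ∈ insert a s then x₀ else g i := by
        funext i
        by_cases hi : i = a
        · subst hi; simp
        · simp [Function.update_of_ne hi, hg', hi]
      have hupd2 : Function.update g' a (g a) = g' := by
        rw [← hga, Function.update_eq_self]
      have hk := key g' a (g a) x₀
      rw [hupd, hupd2] at hk
      rw [Finset.card_insert_of_notMem ha, Finset.prod_insert ha, pow_succ]
      calc e x₀ ^ s.card * e x₀ * φ g = e x₀ * (e x₀ ^ s.card * φ g) := by ring
        _ = e x₀ * ((∏ i ∈ s, e (g i)) * φ g') := by rw [ih]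
        _ = (∏ i ∈ s, e (g i)) * (e x₀ * φ g') := by ring
        _ = (∏ i ∈ s, e (g i)) * (e (g a) * φ (fun i => if i ∈ insert a s then x₀ else g i)) := by
            rw [← hk]
        _ = e (g a) * (∏ i ∈ s, e (g i)) * φ (fun i => if i ∈ insert a s then x₀ else g i) := by
            ring
  have hu := main Finset.univ
  simp only [Finset.mem_univ, if_true, Finset.card_univ, Fintype.card_fin] at hu
  have hpow : e x₀ ^ n ≠ 0 := pow_ne_zero _ hx₀
  simp only [Pi.smul_apply, smul_eq_mul, prodVec]
  field_simp
  linear_combination hu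
end

section
/- Write |e⟩ = (a,b) ∈ ℂ² with a ≠ 0 and suppose |φ⟩ = Σ_{i=1}^{n+1} α_i |E_i^n⟩ is a symmetric n-qubit vector such that |e⟩⊗|φ⟩ is symmetric (lies in S_{n+1}). Then α_j = (b/a)^{j-1} α_1 for all j = 2,…,n+1. -/
/-- The symmetric basis vector of `S_n` with `i` ones (and `n - i` zeros); with the
1-based indexing of the paper this is `|E_{i+1}^n⟩`, so `dickeOnes n 0 = |0⟩^⊗n`. -/
def dickeOnes (n i : ℕ) : QIdx n → ℂ :=
  fun f => if (Finset.univ.filter fun j => f j = 1).card = i then 1 else 0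

lemma card_lt_filter (n m : ℕ) (hm : m ≤ n) :
    (Finset.univ.filter fun j : Fin n => (j : ℕ) < m).card = m := by
  have : (Finset.univ.filter fun j : Fin n => (j : ℕ) < m)
      = Finset.map (Fin.castLEEmb hm) Finset.univ := by
    ext j
    simp only [Finset.mem_filter, Finset.mem_univ, true_and, Finset.mem_map,
      Fin.castLEEmb, Function.Embedding.coeFn_mk]
    constructor
    · intro h; exact ⟨⟨j, h⟩, rfl⟩
    · rintro ⟨i, rfl⟩; simpa using i.isLt
  rw [this, Finset.card_map]; simp

lemma phi_val (n : ℕ) (α : Fin (n + 1) → ℂ) (g : QIdx n) (m : ℕ) (hm : m ≤ n)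
    (hg : (Finset.univ.filter fun j => g j = 1).card = m) :
    (∑ i : Fin (n + 1), α i * dickeOnes n (i : ℕ) g) = α ⟨m, by omega⟩ := by
  rw [Finset.sum_eq_single (⟨m, by omega⟩ : Fin (n + 1))]
  · simp [dickeOnes, hg]
  · intro i _ hi
    have : (i : ℕ) ≠ m := by
      intro h; exact hi (by apply Fin.ext; simpa using h)
    simp [dickeOnes, hg]; intro h; exact absurd h.symm this
  · simp



lemma step (n : ℕ) (a b : ℂ) (α : Fin (n + 1) → ℂ)
    (hsym : SymmVec (tens (oneQ ![a, b])
      (fun f => ∑ i : Fin (n + 1), α i * dickeOnes n (i : ℕ) f)))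
    (k : ℕ) (hk1 : 1 ≤ k) (hk : k ≤ n) :
    b * α ⟨k - 1, by omega⟩ = a * α ⟨k, by omega⟩ := by
  set f : QIdx (1 + n) := fun j => if 1 ≤ (j : ℕ) ∧ (j : ℕ) ≤ k then 1 else 0 with hf
  have hkn : k < 1 + n := by omega
  set z : Fin (1 + n) := ⟨0, by omega⟩ with hz
  have hzv : (z : ℕ) = 0 := rfl
  have h := hsym (Equiv.swap z ⟨k, hkn⟩) f
  unfold tens oneQ at h
  have hca : (Fin.castAdd n 0 : Fin (1 + n)) = z := rfl
  have hσ0 : (f ∘ (Equiv.swap z ⟨k, hkn⟩)) (Fin.castAdd n 0) = 1 := by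
    rw [Function.comp_apply, hca, Equiv.swap_apply_left]
    simp only [hf]
    exact if_pos ⟨hk1, le_refl k⟩
  have hf0 : f (Fin.castAdd n 0) = 0 := by
    simp only [hf, hca]
    exact if_neg (by omega)
  have htail1 : (fun j : Fin n => (f ∘ (Equiv.swap z ⟨k, hkn⟩)) (Fin.natAdd 1 j))
      = fun j : Fin n => if (j : ℕ) < k - 1 then 1 else 0 := by
    funext j
    rw [Function.comp_apply]
    have hv : ((Fin.natAdd 1 j : Fin (1+n)) : ℕ) = 1 + j := rfl
    rcases eq_or_ne ((Fin.natAdd 1 j : Fin (1+n))) ⟨k, hkn⟩ with he | he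
    · rw [he, Equiv.swap_apply_right]
      have hv2 : (1 + (j:ℕ)) = k := by
        have h3 := congrArg Fin.val he; rw [hv] at h3; exact h3
      simp only [hf]
      rw [if_neg (by omega), if_neg (by omega)]
    · rw [Equiv.swap_apply_of_ne_of_ne (by
        intro h0
        have h3 := congrArg Fin.val h0
        rw [hv, hzv] at h3
        omega) he]
      have hne : (1 + (j:ℕ)) ≠ k := by
        intro h0; exact he (by apply Fin.ext; rw [hv]; exact h0)
      simp only [hf]
      by_cases hc : (j:ℕ) < k - 1
      · rw [if_pos (by omega), if_pos hc]
      · rw [if_neg (by omega), if_neg hc]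
  have htail2 : (fun j : Fin n => f (Fin.natAdd 1 j))
      = fun j : Fin n => if (j : ℕ) < k then 1 else 0 := by
    funext j
    have hv : ((Fin.natAdd 1 j : Fin (1+n)) : ℕ) = 1 + j := rfl
    simp only [hf]
    by_cases hc : (j:ℕ) < k
    · rw [if_pos (by omega), if_pos hc]
    · rw [if_neg (by omega), if_neg hc]
  simp only [htail1, htail2, hσ0, hf0] at h
  have hc1 : (Finset.univ.filter fun j : Fin n =>
      (if (j : ℕ) < k - 1 then (1 : Fin 2) else 0) = 1).card = k - 1 := by
    rw [show (Finset.univ.filter fun j : Fin n =>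
        (if (j : ℕ) < k - 1 then (1 : Fin 2) else 0) = 1)
      = Finset.univ.filter fun j : Fin n => (j : ℕ) < k - 1 from by
        apply Finset.filter_congr; intro j _; constructor
        · intro h0; by_contra hc; rw [if_neg hc] at h0; exact absurd h0 (by decide)
        · intro h0; rw [if_pos h0]]
    exact card_lt_filter n (k-1) (by omega)
  have hc2 : (Finset.univ.filter fun j : Fin n =>
      (if (j : ℕ) < k then (1 : Fin 2) else 0) = 1).card = k := by
    rw [show (Finset.univ.filter fun j : Fin n =>
        (if (j : ℕ) < k then (1 : Fin 2) else 0) = 1)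
      = Finset.univ.filter fun j : Fin n => (j : ℕ) < k from by
        apply Finset.filter_congr; intro j _; constructor
        · intro h0; by_contra hc; rw [if_neg hc] at h0; exact absurd h0 (by decide)
        · intro h0; rw [if_pos h0]]
    exact card_lt_filter n k hk
  rw [phi_val n α _ (k-1) (by omega) hc1, phi_val n α _ k hk hc2] at h
  simpa using h

/-- if `|e⟩ = (a,b)` with `a ≠ 0` and `|φ⟩ = Σ_i α_i |E_i^n⟩` is such that
`|e⟩ ⊗ |φ⟩` is symmetric, then `α_j = (b/a)^{j-1} α_1` (here 0-based: `α j = (b/a)^j α 0`). -/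
theorem stmt2 (n : ℕ) (a b : ℂ) (ha : a ≠ 0) (α : Fin (n + 1) → ℂ)
    (hsym : SymmVec (tens (oneQ ![a, b])
      (fun f => ∑ i : Fin (n + 1), α i * dickeOnes n (i : ℕ) f))) :
    ∀ j : Fin (n + 1), α j = (b / a) ^ (j : ℕ) * α 0 := by
  have aux : ∀ m : ℕ, ∀ hm : m < n + 1, α ⟨m, hm⟩ = (b / a) ^ m * α 0 := by
    intro m
    induction m with
    | zero => intro hm; simp
    | succ m ih =>
      intro hm
      have hs := step n a b α hsym (m + 1) (by omega) (by omega)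
      simp only [Nat.add_sub_cancel] at hs
      have h2 : α ⟨m + 1, hm⟩ = (b / a) * α ⟨m, by omega⟩ := by
        field_simp
        linear_combination -hs
      rw [h2, ih (by omega), pow_succ]
      ring
  intro j
  have : j = ⟨(j : ℕ), j.isLt⟩ := rfl
  rw [this, aux j j.isLt]
end

section
/- Let Q_0,…,Q_k be complex polynomials and consider the equation Σ_{i=0}^k (α*)^i Q_i(α) = 0 in the variable α ∈ ℂ (where α* denotes complex conjugation). If max_i deg Q_i = deg Q_k = n > k and deg Q_0 = m > k, then this equation has at least one complex solution α. -/
/-!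
If the sum `f z` had no zero, then, since `ℂ` is simply connected and `exp` is a covering map
onto `ℂ \ {0}`, `f` would have a continuous logarithm on all of `ℂ`; hence every continuous
logarithm of `θ ↦ f (R e^{iθ})` is `2π`-periodic. But for large `|z|` the sum is dominated by
`lc · conj z ^ k · z ^ n` (with `lc` the leading coefficient of `Q_k`), which on the circle
`|z| = R` equals `lc R^(n+k) e^{i(n-k)θ}`. Along such a circle `f` therefore has the logarithm
`log (lc R^(n+k)) + i(n-k)θ + log u(θ)` with `|u(θ) - 1| < 1`, which gains `2πi(n-k) ≠ 0` per turn.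
-/

open ComplexConjugate Asymptotics Bornology Polynomial

namespace Complex

theorem exists_continuous_exp_eq {A : Type*} [TopologicalSpace A] [SimplyConnectedSpace A]
    [LocallyPathConnectedSpace A] {f : A → ℂ} (hf : Continuous f) (h0 : ∀ a, f a ≠ 0) :
    ∃ L : A → ℂ, Continuous L ∧ ∀ a, exp (L a) = f a := by
  obtain ⟨a₀⟩ : Nonempty A := inferInstance
  obtain ⟨L, ⟨-, hL⟩, -⟩ := isCoveringMapOn_exp.existsUnique_continuousMap_lifts ⟨f, hf⟩
    (exp_log (h0 a₀)) h0
  exact ⟨L, L.continuous, congrFun hL⟩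

theorem sub_eq_sub_of_exp_eq {A : Type*} [TopologicalSpace A] [PreconnectedSpace A]
    {F G : A → ℂ} (hF : Continuous F) (hG : Continuous G) (h : ∀ a, exp (F a) = exp (G a))
    (a a' : A) : F a - G a = F a' - G a' :=
  isCoveringMap_exp.const_of_comp (hF.sub hG) (fun a a' => Subtype.ext <| by
    simp only [Pi.sub_apply, Complex.exp_sub, h, div_self (Complex.exp_ne_zero _)]) a a'

theorem periodic_of_exp_eq_comp_circleMap {f : ℂ → ℂ} (hf : Continuous f) (h0 : ∀ z, f z ≠ 0)
    {c : ℂ} {R : ℝ} {ℓ : ℝ → ℂ} (hℓ : Continuous ℓ)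
    (hexp : ∀ θ, exp (ℓ θ) = f (circleMap c R θ)) : Function.Periodic ℓ (2 * Real.pi) := by
  obtain ⟨L, hL, hLexp⟩ := exists_continuous_exp_eq hf h0
  intro θ
  have h := sub_eq_sub_of_exp_eq hℓ (hL.comp (continuous_circleMap c R))
    (fun θ => by rw [hexp, Function.comp_apply, hLexp]) (θ + 2 * Real.pi) θ
  rwa [Function.comp_apply, Function.comp_apply, periodic_circleMap c R θ, sub_left_inj] at h

theorem exists_eq_zero_of_norm_sub_lt_on_circleMap {f : ℂ → ℂ} (hf : Continuous f) {b : ℂ}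
    {d : ℤ} (hd : d ≠ 0) {c : ℂ} {R : ℝ}
    (hlt : ∀ θ : ℝ, ‖f (circleMap c R θ) - b * exp (d * θ * I)‖ < ‖b‖) : ∃ z, f z = 0 := by
  by_contra! h0
  have hb : b ≠ 0 := norm_pos_iff.mp ((norm_nonneg _).trans_lt (hlt 0))
  have hbe : ∀ θ : ℝ, b * exp (d * θ * I) ≠ 0 := fun θ => mul_ne_zero hb (Complex.exp_ne_zero _)
  have hnorm : ∀ θ : ℝ, ‖b * exp (d * θ * I)‖ = ‖b‖ := fun θ => by simp [norm_exp]
  set u : ℝ → ℂ := fun θ => f (circleMap c R θ) / (b * exp (d * θ * I)) with hu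
  have hu_slit : ∀ θ, u θ ∈ slitPlane := fun θ => ball_one_subset_slitPlane <| by
    rw [Metric.mem_ball, dist_eq_norm, hu, div_sub_one (hbe θ), norm_div, hnorm,
      div_lt_one (norm_pos_iff.mpr hb)]
    exact hlt θ
  have hu_cont : Continuous u := (hf.comp (continuous_circleMap c R)).div (by fun_prop) hbe
  have hexp : ∀ θ : ℝ, exp (log b + d * θ * I + log (u θ)) = f (circleMap c R θ) := fun θ => by
    rw [Complex.exp_add, Complex.exp_add, exp_log hb, exp_log (slitPlane_ne_zero (hu_slit θ)),
      mul_div_cancel₀ _ (hbe θ)]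
  have hperiodic : log b + d * ↑(2 * Real.pi) * I + log (u (2 * Real.pi))
      = log b + d * ↑(0 : ℝ) * I + log (u 0) :=
    (periodic_of_exp_eq_comp_circleMap hf h0
      (continuous_const.add (by fun_prop) |>.add (hu_cont.clog hu_slit)) hexp).eq
  have hu_periodic : u (2 * Real.pi) = u 0 := by
    have : exp (d * ↑(2 * Real.pi) * I) = exp (d * ↑(0 : ℝ) * I) := by
      rw [ofReal_zero, mul_zero, zero_mul, Complex.exp_zero, ← exp_int_mul_two_pi_mul_I d]
      push_cast
      ring_nf
    simp only [hu, (periodic_circleMap c R).eq, this]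
  rw [hu_periodic] at hperiodic
  push_cast at hperiodic
  have : (d : ℂ) * (2 * Real.pi) * I = 0 := by linear_combination hperiodic
  simp [hd, Real.pi_ne_zero] at this

theorem conj_pow_mul_pow_circleMap (R θ : ℝ) (j k : ℕ) :
    conj (circleMap 0 R θ) ^ k * circleMap 0 R θ ^ j
      = (R : ℂ) ^ (k + j) * exp (((j : ℤ) - k : ℤ) * θ * I) := by
  have hconj : conj (circleMap 0 R θ) = R * exp (-(θ * I)) := by
    simp [circleMap, ← exp_conj]
  rw [hconj, circleMap, zero_add, mul_pow, mul_pow, pow_add, ← Complex.exp_nat_mul,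
    ← Complex.exp_nat_mul, mul_mul_mul_comm, ← Complex.exp_add]
  congr 2
  push_cast
  ring

theorem exists_eq_zero_of_isEquivalent_conj_pow_mul_pow {f : ℂ → ℂ} (hf : Continuous f) {a : ℂ}
    (ha : a ≠ 0) {j k : ℕ} (hjk : j ≠ k)
    (h : f ~[cobounded ℂ] fun z => a * conj z ^ k * z ^ j) : ∃ z, f z = 0 := by
  have hlt : ∀ᶠ z in cobounded ℂ,
      ‖f z - a * conj z ^ k * z ^ j‖ < ‖a * conj z ^ k * z ^ j‖ :=
    h.isLittleO.eventuallyLT_norm_of_eventually_pos <|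
      (eventually_ne_cobounded 0).mono fun z hz => by simp [ha, hz]
  obtain ⟨r, -, hr⟩ := (Metric.hasBasis_cobounded_compl_closedBall (0 : ℂ)).eventually_iff.mp hlt
  set R : ℝ := max r 0 + 1
  refine exists_eq_zero_of_norm_sub_lt_on_circleMap hf (b := a * R ^ (k + j)) (c := 0) (R := R)
    (sub_ne_zero.mpr (Int.ofNat_inj.not.mpr hjk)) fun θ => ?_
  have hR : r < |R| := by rw [abs_of_pos (by positivity)]; linarith [le_max_left r 0]
  have h := @hr (circleMap 0 R θ) (by simpa [norm_circleMap_zero] using hR)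
  rw [mul_assoc, conj_pow_mul_pow_circleMap, ← mul_assoc] at h
  simpa [norm_exp] using h

theorem isBigO_conj_pow_mul_eval (q : ℂ[X]) (i : ℕ) :
    (fun z => conj z ^ i * q.eval z) =O[cobounded ℂ] (· ^ (i + q.natDegree)) := by
  have hconj : (fun z : ℂ => conj z ^ i) =O[cobounded ℂ] (· ^ i) :=
    isBigO_of_le _ fun z => by simp
  have heval : (fun z => q.eval z) =O[cobounded ℂ] (· ^ q.natDegree) :=
    isEquivalent_cobounded_leading_monomial.isBigO.trans (isBigO_const_mul_self _ _ _)
  simpa only [pow_add] using hconj.mul heval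

theorem isLittleO_conj_pow_mul_eval {q : ℂ[X]} {i N : ℕ} (h : i + q.natDegree < N) :
    (fun z => conj z ^ i * q.eval z) =o[cobounded ℂ] (· ^ N) :=
  (isBigO_conj_pow_mul_eval q i).trans_isLittleO (isLittleO_pow_pow_cobounded_of_lt h)

theorem isEquivalent_sum_conj_pow_mul_eval {k : ℕ} (Q : Fin (k + 1) → ℂ[X])
    (hmax : ∀ i, (Q i).natDegree ≤ (Q (Fin.last k)).natDegree)
    (hn : 0 < (Q (Fin.last k)).natDegree) :
    (fun z => ∑ i : Fin (k + 1), conj z ^ (i : ℕ) * (Q i).eval z) ~[cobounded ℂ]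
      fun z => (Q (Fin.last k)).leadingCoeff * conj z ^ k * z ^ (Q (Fin.last k)).natDegree := by
  set p := Q (Fin.last k)
  have hdecomp : ∀ z, ∑ i : Fin (k + 1), conj z ^ (i : ℕ) * (Q i).eval z
      - p.leadingCoeff * conj z ^ k * z ^ p.natDegree
      = ∑ i : Fin k, conj z ^ (i : ℕ) * (Q i.castSucc).eval z
        + conj z ^ k * p.eraseLead.eval z := fun z => by
    have hp : p.eval z = p.eraseLead.eval z + p.leadingCoeff * z ^ p.natDegree := by
      nth_rw 1 [← p.eraseLead_add_monomial_natDegree_leadingCoeff]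
      rw [eval_add, eval_monomial]
    rw [Fin.sum_univ_castSucc, Fin.val_last, hp]
    simp only [Fin.val_castSucc]
    ring
  have hsmall : (fun z => ∑ i : Fin (k + 1), conj z ^ (i : ℕ) * (Q i).eval z
      - p.leadingCoeff * conj z ^ k * z ^ p.natDegree) =o[cobounded ℂ] (· ^ (k + p.natDegree)) := by
    simp only [hdecomp]
    refine (IsLittleO.fun_sum fun i _ => isLittleO_conj_pow_mul_eval ?_).add
      (isLittleO_conj_pow_mul_eval ?_)
    · have := hmax i.castSucc
      omega
    · have := p.eraseLead_natDegree_le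
      omega
  have hlc : p.leadingCoeff ≠ 0 := leadingCoeff_ne_zero.mpr (ne_zero_of_natDegree_gt hn)
  refine hsmall.trans_isBigO (isBigO_of_le' (c := ‖p.leadingCoeff‖⁻¹) _ fun z => ?_)
  rw [norm_mul, norm_mul, norm_pow, norm_pow, norm_pow, norm_conj, mul_assoc, inv_mul_cancel_left₀
    (norm_ne_zero_iff.mpr hlc), pow_add]

end Complex

theorem stmt5_general (k : ℕ) (Q : Fin (k + 1) → Polynomial ℂ)
    (hmax : ∀ i, (Q i).natDegree ≤ (Q (Fin.last k)).natDegree)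
    (hn : k < (Q (Fin.last k)).natDegree) :
    ∃ α : ℂ, ∑ i : Fin (k + 1), (starRingEnd ℂ α) ^ (i : ℕ) * (Q i).eval α = 0 := by
  exact Complex.exists_eq_zero_of_isEquivalent_conj_pow_mul_pow
      (continuous_finsetSum _ fun i _ => (Complex.continuous_conj.pow _).mul (Q i).continuous)
      (leadingCoeff_ne_zero.mpr (ne_zero_of_natDegree_gt hn)) hn.ne'
      (Complex.isEquivalent_sum_conj_pow_mul_eval Q hmax (Nat.zero_lt_of_lt hn))

/-- consider the equation `Σ_{i=0}^k (α*)^i Q_i(α) = 0` where the `Q_i` are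
complex polynomials. If `max_i deg Q_i = deg Q_k = n > k` and `deg Q_0 = m > k`, then the
equation has at least one complex solution. -/
theorem stmt5 (k : ℕ) (Q : Fin (k + 1) → Polynomial ℂ)
    (hmax : ∀ i, (Q i).natDegree ≤ (Q (Fin.last k)).natDegree)
    (hn : k < (Q (Fin.last k)).natDegree)
    (hm : k < (Q 0).natDegree) :
    ∃ α : ℂ, ∑ i : Fin (k + 1), (starRingEnd ℂ α) ^ (i : ℕ) * (Q i).eval α = 0 :=
  stmt5_general k Q hmax hn
end

section
/- Let ρ be an N-qubit symmetric state and fix a bipartition S|S̄ with |S| ≤ N−|S|. If the reduced state ρ_{S̄} = Tr_S ρ has a nontrivial kernel (dimension k_{S̄} > 0) with rank r_{S̄}, then rank(ρ) ≤ r_{S̄}; symmetrically, if ρ_S has nontrivial kernel with rank r_S, then rank(ρ) ≤ r_S. -/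
open scoped ComplexOrder

def SuppSymm {N : ℕ} (ρ : Matrix (QIdx N) (QIdx N) ℂ) : Prop :=
  ∀ v, SymmVec (ρ.mulVec v)

/-- Partial trace over the qubits in `S`: the reduced operator on the qubits outside `S`. -/
noncomputable def ptrace {N : ℕ} (S : Finset (Fin N)) (ρ : Matrix (QIdx N) (QIdx N) ℂ) :
    Matrix ({i : Fin N // i ∉ S} → Fin 2) ({i : Fin N // i ∉ S} → Fin 2) ℂ :=
  Matrix.of fun x y => ∑ z : ({i : Fin N // i ∈ S} → Fin 2),
    ρ (fun i => if h : i ∈ S then z ⟨i, h⟩ else x ⟨i, h⟩)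
      (fun i => if h : i ∈ S then z ⟨i, h⟩ else y ⟨i, h⟩)

/-!
The Dicke map `ψ ↦ ∑ f, ψ f • X ^ |f|`, with `|f|` the Hamming weight, identifies the symmetric
subspace of `n` qubits with the polynomials of degree `≤ n`. A matrix whose columns are permutation
invariant vanishes on the kernel of the Dicke map, so its rank is `n + 1 - dim V`, where `V` is the
Dicke image of its kernel. If `ρ_{S̄} φ = 0`, positivity of `ρ` forces `ρ (|z⟩ ⊗ φ) = 0` for every
basis state `z` of the qubits in `S`, and the Dicke image of `|z⟩ ⊗ φ` is `X ^ |z|` times that of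
`φ`. Hence `X ^ j • V_{S̄} ⊆ V_ρ` for `j ≤ |S|`. Since a nonzero space of polynomials of bounded
degree is never stable under multiplication by `X`, this forces `dim V_ρ ≥ dim V_{S̄} + |S|`,
i.e. `rank ρ ≤ rank ρ_{S̄}`.
-/

open Polynomial Module

namespace Polynomial

variable {K : Type*} [Field K]

theorem exists_X_mul_notMem_of_le_degreeLT {V : Submodule K K[X]} {n : ℕ}
    (hV : V ≤ degreeLT K n) (hV₀ : V ≠ ⊥) : ∃ p ∈ V, X * p ∉ V := by
  by_contra! hX
  obtain ⟨p, hp, hp₀⟩ := Submodule.exists_mem_ne_zero_of_ne_bot hV₀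
  have hXp : ∀ k, X ^ k * p ∈ V := by
    intro k
    induction k with
    | zero => simpa using hp
    | succ k ih => simpa [pow_succ', mul_assoc] using hX _ ih
  have hdeg := mem_degreeLT.mp (hV (hXp n))
  rw [degree_mul, degree_X_pow, degree_eq_natDegree hp₀] at hdeg
  norm_cast at hdeg
  omega

theorem finrank_add_le_of_X_pow_mul_mem {V T : Submodule K K[X]} {n : ℕ}
    (hV : V ≤ degreeLT K n) (hV₀ : V ≠ ⊥) [FiniteDimensional K T] {m : ℕ}
    (hT : ∀ j ≤ m, ∀ p ∈ V, X ^ j * p ∈ T) : finrank K V + m ≤ finrank K T := by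
  induction m generalizing V n with
  | zero =>
    exact Submodule.finrank_mono fun p hp => by simpa using hT 0 le_rfl p hp
  | succ m ih =>
    obtain ⟨p, hp, hXp⟩ := exists_X_mul_notMem_of_le_degreeLT hV hV₀
    set V' := V ⊔ K ∙ (X * p)
    have hV' : V' ≤ degreeLT K (n + 1) := by
      refine sup_le (hV.trans (degreeLT_mono n.le_succ)) ?_
      rw [Submodule.span_singleton_le_iff_mem, mem_degreeLT, mul_comm, degree_mul_X,
        Nat.cast_succ]
      exact WithBot.add_lt_add_right WithBot.one_ne_bot (mem_degreeLT.mp (hV hp))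
    have hT' : ∀ j ≤ m, ∀ q ∈ V', X ^ j * q ∈ T := by
      intro j hj q hq
      obtain ⟨v, hv, w, hw, rfl⟩ := Submodule.mem_sup.mp hq
      obtain ⟨a, rfl⟩ := Submodule.mem_span_singleton.mp hw
      rw [mul_add, mul_smul_comm, ← mul_assoc, ← pow_succ]
      exact T.add_mem (hT j (by omega) v hv) (T.smul_mem a (hT (j + 1) (by omega) p hp))
    have : FiniteDimensional K V' :=
      Submodule.finiteDimensional_of_le fun q hq => by simpa using hT' 0 (Nat.zero_le _) q hq
    have hlt : V < V' := lt_of_le_of_ne le_sup_left fun h =>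
      hXp (h ▸ Submodule.mem_sup_right (Submodule.mem_span_singleton_self _))
    have := Submodule.finrank_lt_finrank_of_lt hlt
    have := ih hV' (ne_bot_of_le_ne_bot hV₀ le_sup_left) hT'
    omega

end Polynomial

theorem LinearMap.finrank_map_add_finrank_ker_of_ker_le {K V W : Type*} [DivisionRing K]
    [AddCommGroup V] [Module K V] [FiniteDimensional K V] [AddCommGroup W] [Module K W]
    (L : V →ₗ[K] W) {P : Submodule K V} (h : LinearMap.ker L ≤ P) :
    finrank K (P.map L) + finrank K (LinearMap.ker L) = finrank K P := by
  have := (L.domRestrict P).finrank_range_add_finrank_ker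
  rwa [LinearMap.range_domRestrict, LinearMap.ker_domRestrict,
    (Submodule.comapSubtypeEquivOfLe h).finrank_eq] at this

section Dicke

variable {K : Type*} [Field K] {ι : Type*} [Fintype ι]

theorem exists_hammingNorm_eq {k : ℕ} (hk : k ≤ Fintype.card ι) :
    ∃ f : ι → Fin 2, hammingNorm f = k := by
  classical
  obtain ⟨s, -, rfl⟩ := Finset.exists_subset_card_eq (s := (Finset.univ : Finset ι)) hk
  exact ⟨fun i => if i ∈ s then 1 else 0, by simp [hammingNorm]⟩

theorem card_fiber_eq_of_hammingNorm_eq {f g : ι → Fin 2}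
    (h : hammingNorm f = hammingNorm g) (c : Fin 2) :
    Fintype.card {i // f i = c} = Fintype.card {i // g i = c} := by
  have hzero (f : ι → Fin 2) : Fintype.card {i // f i = 0} + hammingNorm f = Fintype.card ι := by
    rw [Fintype.card_subtype, hammingNorm, add_comm]
    simpa using Finset.card_filter_add_card_filter_not (s := Finset.univ) (fun i => f i ≠ 0)
  have hone (f : ι → Fin 2) : Fintype.card {i // f i = 1} = hammingNorm f := by
    have h01 : ∀ a : Fin 2, a = 1 ↔ a ≠ 0 := by decide
    rw [Fintype.card_congr (Equiv.subtypeEquivRight fun i => h01 (f i))]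
    exact Fintype.card_subtype _
  fin_cases c
  · have := hzero f
    have := hzero g
    simp only [Fin.zero_eta]
    omega
  · simp only [Fin.mk_one, hone, h]

theorem exists_perm_comp_eq_of_hammingNorm_eq {f g : ι → Fin 2}
    (h : hammingNorm f = hammingNorm g) : ∃ σ : Equiv.Perm ι, g ∘ σ = f :=
  ⟨Equiv.ofFiberEquiv fun c => Fintype.equivOfCardEq (card_fiber_eq_of_hammingNorm_eq h c),
    funext (Equiv.ofFiberEquiv_map _)⟩

variable [DecidableEq ι]

variable (K ι) in
noncomputable def dickeMap : ((ι → Fin 2) → K) →ₗ[K] K[X] :=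
  Fintype.linearCombination K fun f => X ^ hammingNorm f

theorem dickeMap_apply (ψ : (ι → Fin 2) → K) :
    dickeMap K ι ψ = ∑ f, ψ f • X ^ hammingNorm f :=
  Fintype.linearCombination_apply _ _ _

theorem range_dickeMap : LinearMap.range (dickeMap K ι) = degreeLT K (Fintype.card ι + 1) := by
  classical
  rw [dickeMap, Fintype.range_linearCombination, degreeLT_eq_span_X_pow]
  congr 1
  ext p
  simp only [Set.mem_range, Finset.coe_image, Finset.coe_range, Set.mem_image, Set.mem_Iio,
    Nat.lt_succ_iff]
  constructor
  · rintro ⟨f, rfl⟩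
    exact ⟨_, hammingNorm_le_card_fintype, rfl⟩
  · rintro ⟨k, hk, rfl⟩
    obtain ⟨f, rfl⟩ := exists_hammingNorm_eq hk
    exact ⟨f, rfl⟩

theorem finrank_ker_dickeMap :
    finrank K (LinearMap.ker (dickeMap K ι)) + (Fintype.card ι + 1) = 2 ^ Fintype.card ι := by
  have h := (dickeMap K ι).finrank_range_add_finrank_ker
  rw [range_dickeMap, (degreeLTEquiv K _).finrank_eq] at h
  simpa [add_comm] using h

theorem ker_dickeMap_le_ker_mulVecLin {M : Matrix (ι → Fin 2) (ι → Fin 2) K}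
    (hM : ∀ g f (σ : Equiv.Perm ι), M g (f ∘ σ) = M g f) :
    LinearMap.ker (dickeMap K ι) ≤ LinearMap.ker M.mulVecLin := by
  intro ψ hψ
  rw [LinearMap.mem_ker] at hψ ⊢
  ext g
  have hfac : Function.FactorsThrough (M g) hammingNorm := fun f f' h => by
    obtain ⟨σ, rfl⟩ := exists_perm_comp_eq_of_hammingNorm_eq h
    exact hM g f' σ
  -- Row `g` of `M` is the functional `X ^ k ↦ M g f` (for any `f` of weight `k`) on Dicke images.
  have := congr(lsum (fun k => LinearMap.mulLeft K (Function.extend hammingNorm (M g) 0 k)) $hψ)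
  simpa [dickeMap_apply, X_pow_eq_monomial, sum_monomial_index, hfac.extend_apply,
    Matrix.mulVec, dotProduct, mul_comm] using this

theorem rank_add_finrank_map_ker_eq {M : Matrix (ι → Fin 2) (ι → Fin 2) K}
    (hM : LinearMap.ker (dickeMap K ι) ≤ LinearMap.ker M.mulVecLin) :
    M.rank + finrank K ((LinearMap.ker M.mulVecLin).map (dickeMap K ι)) = Fintype.card ι + 1 := by
  have hsplit := (dickeMap K ι).finrank_map_add_finrank_ker_of_ker_le hM
  have hrank := M.mulVecLin.finrank_range_add_finrank_ker
  have hL := finrank_ker_dickeMap (K := K) (ι := ι)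
  simp only [finrank_fintype_fun_eq_card, Fintype.card_fun, Fintype.card_fin] at hrank
  rw [Matrix.rank]
  omega

end Dicke

section Qubits

open Matrix

variable {N : ℕ} (S : Finset (Fin N))

def splitQubits : QIdx N ≃ ({i : Fin N // i ∈ S} → Fin 2) × ({i : Fin N // i ∉ S} → Fin 2) :=
  Equiv.piEquivPiSubtypeProd (· ∈ S) fun _ => Fin 2

theorem ptrace_apply (ρ : Matrix (QIdx N) (QIdx N) ℂ) (x y : {i : Fin N // i ∉ S} → Fin 2) :
    ptrace S ρ x y =
      ∑ z, ρ ((splitQubits S).symm (z, x)) ((splitQubits S).symm (z, y)) :=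
  rfl

theorem hammingNorm_splitQubits_symm (z : {i : Fin N // i ∈ S} → Fin 2)
    (x : {i : Fin N // i ∉ S} → Fin 2) :
    hammingNorm ((splitQubits S).symm (z, x)) = hammingNorm z + hammingNorm x := by
  simp only [hammingNorm, Finset.card_filter]
  rw [← (Equiv.sumCompl (· ∈ S)).sum_comp, Fintype.sum_sum_type]
  simp only [splitQubits, Equiv.sumCompl_apply_inl, Equiv.sumCompl_apply_inr,
    Equiv.piEquivPiSubtypeProd_symm_apply]
  congr 1 <;> refine Fintype.sum_congr _ _ fun i => ?_
  · rw [dif_pos i.2]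
  · rw [dif_neg i.2]

/-- The vector `|z⟩_S ⊗ φ` with `z` a computational basis state of the qubits in `S`. -/
def basisTensor {R : Type*} [Zero R] (z : {i : Fin N // i ∈ S} → Fin 2)
    (φ : ({i : Fin N // i ∉ S} → Fin 2) → R) : QIdx N → R :=
  fun f => if (splitQubits S f).1 = z then φ (splitQubits S f).2 else 0

theorem sum_basisTensor_smul {R M : Type*} [Zero R] [AddCommMonoid M] [SMulWithZero R M]
    (z : {i : Fin N // i ∈ S} → Fin 2) (φ : ({i : Fin N // i ∉ S} → Fin 2) → R)
    (G : QIdx N → M) :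
    ∑ f, basisTensor S z φ f • G f = ∑ x, φ x • G ((splitQubits S).symm (z, x)) := by
  rw [← (splitQubits S).symm.sum_comp, Fintype.sum_prod_type, Fintype.sum_eq_single z]
  · simp [basisTensor]
  · intro w hw
    simp [basisTensor, hw]

theorem dickeMap_basisTensor {K : Type*} [Field K] (z : {i : Fin N // i ∈ S} → Fin 2)
    (φ : ({i : Fin N // i ∉ S} → Fin 2) → K) :
    dickeMap K (Fin N) (basisTensor S z φ) = X ^ hammingNorm z * dickeMap K _ φ := by
  simp only [dickeMap_apply, sum_basisTensor_smul, hammingNorm_splitQubits_symm, pow_add,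
    Finset.mul_sum, mul_smul_comm]

variable {ρ : Matrix (QIdx N) (QIdx N) ℂ}

theorem mulVec_ptrace_apply (φ : ({i : Fin N // i ∉ S} → Fin 2) → ℂ)
    (x : {i : Fin N // i ∉ S} → Fin 2) :
    (ptrace S ρ *ᵥ φ) x = ∑ z, (ρ *ᵥ basisTensor S z φ) ((splitQubits S).symm (z, x)) := by
  simp only [Matrix.mulVec, dotProduct, ptrace_apply, Finset.sum_mul]
  rw [Finset.sum_comm]
  refine Fintype.sum_congr _ _ fun z => ?_
  have h := sum_basisTensor_smul S z φ (ρ ((splitQubits S).symm (z, x)))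
  simp only [smul_eq_mul] at h
  simp_rw [mul_comm (ρ _ _)]
  exact h.symm

theorem dotProduct_mulVec_ptrace (φ : ({i : Fin N // i ∉ S} → Fin 2) → ℂ) :
    star φ ⬝ᵥ (ptrace S ρ *ᵥ φ) =
      ∑ z, star (basisTensor S z φ) ⬝ᵥ (ρ *ᵥ basisTensor S z φ) := by
  have hstar (z) : star (basisTensor S z φ) = basisTensor S z (star φ) := by
    ext f
    simp [basisTensor, apply_ite star]
  simp only [hstar, dotProduct, mulVec_ptrace_apply, Finset.mul_sum]
  rw [Finset.sum_comm]
  refine Fintype.sum_congr _ _ fun z => ?_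
  have h := sum_basisTensor_smul S z (star φ) (ρ *ᵥ basisTensor S z φ)
  simp only [smul_eq_mul] at h
  exact h.symm

theorem mulVec_basisTensor_eq_zero (hρ : ρ.PosSemidef) {φ : ({i : Fin N // i ∉ S} → Fin 2) → ℂ}
    (hφ : ptrace S ρ *ᵥ φ = 0) (z : {i : Fin N // i ∈ S} → Fin 2) :
    ρ *ᵥ basisTensor S z φ = 0 := by
  have hsum := dotProduct_mulVec_ptrace S (ρ := ρ) φ
  rw [hφ, dotProduct_zero, eq_comm, Finset.sum_eq_zero_iff_of_nonneg
    fun z _ => hρ.dotProduct_mulVec_nonneg _] at hsum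
  exact (hρ.dotProduct_mulVec_zero_iff _).mp (hsum z (Finset.mem_univ z))

theorem ker_dickeMap_le_ker_ptrace
    (hρ : LinearMap.ker (dickeMap ℂ (Fin N)) ≤ LinearMap.ker ρ.mulVecLin) :
    LinearMap.ker (dickeMap ℂ {i : Fin N // i ∉ S}) ≤ LinearMap.ker (ptrace S ρ).mulVecLin := by
  intro φ hφ
  rw [LinearMap.mem_ker] at hφ ⊢
  ext x
  have hz (z) : ρ *ᵥ basisTensor S z φ = 0 :=
    hρ (by rw [LinearMap.mem_ker, dickeMap_basisTensor, hφ, mul_zero])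
  simp [mulVec_ptrace_apply, hz]

theorem SuppSymm.apply_comp_perm (hρ : ρ.IsHermitian) (hsupp : SuppSymm ρ) (g f : QIdx N)
    (σ : Equiv.Perm (Fin N)) : ρ g (f ∘ σ) = ρ g f := by
  have hrow (f) : ρ (f ∘ σ) g = ρ f g := by simpa using hsupp (Pi.single g 1) σ f
  rw [← hρ.apply, hrow, hρ.apply]

end Qubits

theorem rank_le_rank_ptrace {N : ℕ} {ρ : Matrix (QIdx N) (QIdx N) ℂ} (hρ : ρ.PosSemidef)
    (hsupp : SuppSymm ρ) (S : Finset (Fin N))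
    (hrank : (ptrace S ρ).rank < Fintype.card {i : Fin N // i ∉ S} + 1) :
    ρ.rank ≤ (ptrace S ρ).rank := by
  have hρker := ker_dickeMap_le_ker_mulVecLin (hsupp.apply_comp_perm hρ.1)
  have hV := rank_add_finrank_map_ker_eq (ker_dickeMap_le_ker_ptrace S hρker)
  have hT := rank_add_finrank_map_ker_eq hρker
  set V := (LinearMap.ker (ptrace S ρ).mulVecLin).map (dickeMap ℂ {i : Fin N // i ∉ S})
  set T := (LinearMap.ker ρ.mulVecLin).map (dickeMap ℂ (Fin N))
  have hV₀ : V ≠ ⊥ := by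
    intro h
    rw [h, finrank_bot] at hV
    omega
  have hVdeg : V ≤ degreeLT ℂ (Fintype.card {i : Fin N // i ∉ S} + 1) :=
    range_dickeMap.le.trans' LinearMap.map_le_range
  have hVT : ∀ j ≤ Fintype.card {i : Fin N // i ∈ S}, ∀ p ∈ V, X ^ j * p ∈ T := by
    rintro j hj _ ⟨φ, hφ, rfl⟩
    obtain ⟨z, rfl⟩ := exists_hammingNorm_eq hj
    exact ⟨basisTensor S z φ, mulVec_basisTensor_eq_zero S hρ hφ z, dickeMap_basisTensor S z φ⟩
  have hdim := finrank_add_le_of_X_pow_mul_mem hVdeg hV₀ hVT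
  have hcard := Fintype.card_subtype_compl (· ∈ S)
  rw [Fintype.card_fin] at hT hcard
  have := Fintype.card_subtype_le (· ∈ S)
  omega

theorem stmt7_general (N : ℕ) (ρ : Matrix (QIdx N) (QIdx N) ℂ)
    (hPSD : ρ.PosSemidef) (hsupp : SuppSymm ρ)
    (S : Finset (Fin N)) :
    ((ptrace S ρ).rank < N - S.card + 1 → ρ.rank ≤ (ptrace S ρ).rank) ∧
    ((ptrace Sᶜ ρ).rank < S.card + 1 → ρ.rank ≤ (ptrace Sᶜ ρ).rank) := by
  refine ⟨fun h => rank_le_rank_ptrace hPSD hsupp S ?_,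
    fun h => rank_le_rank_ptrace hPSD hsupp Sᶜ ?_⟩
  · simpa [Fintype.card_subtype_compl] using h
  · simpa using h

/-- for an `N`-qubit symmetric state `ρ` and a bipartition `S|S̄` with
`|S| ≤ N - |S|`: if the reduced state `ρ_{S̄} = Tr_S ρ` has a nontrivial kernel (as an
operator on `S_{N-|S|} ≅ ℂ^{N-|S|+1}`, i.e. its rank is `< N-|S|+1`) then
`rank ρ ≤ rank ρ_{S̄}`; symmetrically for `ρ_S = Tr_{S̄} ρ`. -/
theorem stmt7 (N : ℕ) (ρ : Matrix (QIdx N) (QIdx N) ℂ)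
    (hPSD : ρ.PosSemidef) (hsupp : SuppSymm ρ)
    (S : Finset (Fin N)) (hS : 2 * S.card ≤ N) :
    ((ptrace S ρ).rank < N - S.card + 1 → ρ.rank ≤ (ptrace S ρ).rank) ∧
    ((ptrace Sᶜ ρ).rank < S.card + 1 → ρ.rank ≤ (ptrace Sᶜ ρ).rank) :=
  stmt7_general N ρ hPSD hsupp S
end

section
/- Let ρ be a PSD operator and suppose |φ_1⟩,…,|φ_k⟩ are linearly independent symmetric m-qubit vectors in the kernel of Tr_S ρ, where ρ is an N-qubit symmetric state and m = N−|S|. Then for any fixed |S|-qubit symmetric vector |ψ⟩, the projected vectors P_N(|ψ⟩⊗|φ_i⟩), i = 1,…,k, are linearly independent, where P_N is the orthogonal projector onto the symmetric subspace S_N. -/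
/-- The orthogonal projector `P_N` onto the symmetric subspace `S_N`,
applied to a vector. -/
noncomputable def symProj (N : ℕ) (ψ : QIdx N → ℂ) : QIdx N → ℂ :=
  fun f => (N.factorial : ℂ)⁻¹ * ∑ σ : Equiv.Perm (Fin N), ψ (f ∘ σ)

/-!
Send a vector `χ` on `N` qubits to its weight enumerator `∑_f χ(f) X^|f|`, where `|f|` counts the
ones in the basis index `f`. This map is invariant under the symmetrizer `P_N`, multiplicative on
tensor products, and injective on symmetric vectors, since a symmetric vector is constant on each
weight class. So `P_N(ψ ⊗ χ) = 0` with `ψ, χ` symmetric gives `W(ψ) W(χ) = 0` in the domain `ℂ[X]`,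
hence `χ = 0` when `ψ ≠ 0`: the linear map `χ ↦ P_N(ψ ⊗ χ)` is injective on the symmetric subspace,
which contains the span of the `φ_i`.
-/

open Finset Polynomial

def weight {N : ℕ} (f : QIdx N) : ℕ := #{i | f i = 1}

lemma weight_comp_perm {N : ℕ} (f : QIdx N) (σ : Equiv.Perm (Fin N)) :
    weight (f ∘ σ) = weight f := by
  simp only [weight, card_filter, Function.comp_apply]
  exact Equiv.sum_comp σ fun i => if f i = 1 then 1 else 0

lemma weight_append {a b : ℕ} (u : QIdx a) (v : QIdx b) :
    weight (Fin.append u v) = weight u + weight v := by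
  simp only [weight, card_filter, Fin.sum_univ_add, Fin.append_left, Fin.append_right]

lemma card_fiber_eq_of_weight_eq {N : ℕ} {f g : QIdx N} (h : weight f = weight g) (c : Fin 2) :
    Fintype.card {i // f i = c} = Fintype.card {i // g i = c} := by
  fin_cases c
  · have hzero (u : QIdx N) : Fintype.card {i // u i = 0} = N - weight u := by
      have hiff : ∀ i, u i = 0 ↔ ¬ u i = 1 := by omega
      simp [Fintype.card_subtype, weight, hiff, filter_not, card_sdiff]
    simp only [Fin.zero_eta, hzero, h]
  · simpa [Fintype.card_subtype, weight] using h

lemma exists_perm_comp_eq_of_weight_eq {N : ℕ} {f g : QIdx N} (h : weight f = weight g) :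
    ∃ σ : Equiv.Perm (Fin N), f ∘ σ = g :=
  ⟨Equiv.ofFiberEquiv fun c => Fintype.equivOfCardEq (card_fiber_eq_of_weight_eq h c).symm,
    funext (Equiv.ofFiberEquiv_map _)⟩

lemma SymmVec.apply_eq_of_weight_eq {N : ℕ} {χ : QIdx N → ℂ} (hχ : SymmVec χ) {f g : QIdx N}
    (h : weight f = weight g) : χ f = χ g := by
  obtain ⟨σ, rfl⟩ := exists_perm_comp_eq_of_weight_eq h
  exact (hχ σ f).symm

noncomputable def weightEnum (N : ℕ) : (QIdx N → ℂ) →ₗ[ℂ] ℂ[X] :=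
  Fintype.linearCombination ℂ fun f => X ^ weight f

lemma weightEnum_apply {N : ℕ} (χ : QIdx N → ℂ) :
    weightEnum N χ = ∑ f, χ f • X ^ weight f :=
  rfl

lemma coeff_weightEnum {N : ℕ} (χ : QIdx N → ℂ) (w : ℕ) :
    (weightEnum N χ).coeff w = ∑ f with weight f = w, χ f := by
  simp [weightEnum_apply, finsetSum_coeff, coeff_X_pow, sum_filter, eq_comm]

lemma SymmVec.coeff_weightEnum_weight {N : ℕ} {χ : QIdx N → ℂ} (hχ : SymmVec χ) (f : QIdx N) :
    (weightEnum N χ).coeff (weight f) = #{g : QIdx N | weight g = weight f} * χ f := by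
  rw [coeff_weightEnum, sum_congr rfl fun g hg => hχ.apply_eq_of_weight_eq (mem_filter.mp hg).2,
    sum_const, nsmul_eq_mul]

lemma SymmVec.eq_zero_of_weightEnum_eq_zero {N : ℕ} {χ : QIdx N → ℂ} (hχ : SymmVec χ)
    (h : weightEnum N χ = 0) : χ = 0 := by
  funext f
  have hcard : (#{g : QIdx N | weight g = weight f} : ℂ) ≠ 0 :=
    Nat.cast_ne_zero.mpr (card_ne_zero_of_mem (mem_filter.mpr ⟨mem_univ f, rfl⟩))
  have hcoeff := hχ.coeff_weightEnum_weight f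
  rw [h, coeff_zero, eq_comm, mul_eq_zero] at hcoeff
  exact hcoeff.resolve_left hcard

lemma weightEnum_comp_perm {N : ℕ} (χ : QIdx N → ℂ) (σ : Equiv.Perm (Fin N)) :
    weightEnum N (fun f => χ (f ∘ σ)) = weightEnum N χ := by
  simp only [weightEnum_apply]
  refine Fintype.sum_equiv (σ.symm.arrowCongr (Equiv.refl _)) _ _ fun f => ?_
  change _ = χ (f ∘ σ) • X ^ weight (f ∘ σ)
  rw [weight_comp_perm]

lemma symProj_eq_smul_sum (N : ℕ) (χ : QIdx N → ℂ) :
    symProj N χ = (N.factorial : ℂ)⁻¹ • ∑ σ : Equiv.Perm (Fin N), fun f => χ (f ∘ σ) := by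
  funext f
  simp [symProj]

lemma weightEnum_symProj (N : ℕ) (χ : QIdx N → ℂ) :
    weightEnum N (symProj N χ) = weightEnum N χ := by
  rw [symProj_eq_smul_sum, map_smul, map_sum]
  simp only [weightEnum_comp_perm, sum_const, card_univ, Fintype.card_perm, Fintype.card_fin,
    ← Nat.cast_smul_eq_nsmul ℂ, smul_smul]
  rw [inv_mul_cancel₀ (Nat.cast_ne_zero.mpr N.factorial_ne_zero), one_smul]

lemma weightEnum_tens {a b : ℕ} (ψ : QIdx a → ℂ) (φ : QIdx b → ℂ) :
    weightEnum (a + b) (tens ψ φ) = weightEnum a ψ * weightEnum b φ := by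
  simp only [weightEnum_apply, sum_mul_sum, ← Fintype.sum_prod_type']
  rw [← (Fin.appendEquiv a b).sum_comp]
  refine sum_congr rfl fun p _ => ?_
  change tens ψ φ (Fin.append p.1 p.2) • X ^ weight (Fin.append p.1 p.2) = _
  rw [weight_append, pow_add, smul_mul_smul_comm]
  simp only [tens, Fin.append_left, Fin.append_right]

lemma eq_zero_of_symProj_tens_eq_zero {a b : ℕ} {ψ : QIdx a → ℂ} (hψsym : SymmVec ψ) (hψ : ψ ≠ 0)
    {χ : QIdx b → ℂ} (hχ : SymmVec χ) (h : symProj (a + b) (tens ψ χ) = 0) : χ = 0 := by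
  have hprod : weightEnum a ψ * weightEnum b χ = 0 := by
    rw [← weightEnum_tens, ← weightEnum_symProj, h, map_zero]
  have hψ' : weightEnum a ψ ≠ 0 := mt hψsym.eq_zero_of_weightEnum_eq_zero hψ
  exact hχ.eq_zero_of_weightEnum_eq_zero ((mul_eq_zero.mp hprod).resolve_left hψ')

noncomputable def symProjTensLeft {a b : ℕ} (ψ : QIdx a → ℂ) :
    (QIdx b → ℂ) →ₗ[ℂ] (QIdx (a + b) → ℂ) where
  toFun χ := symProj (a + b) (tens ψ χ)
  map_add' χ χ' := by
    funext f
    simp [symProj, tens, mul_add, sum_add_distrib]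
  map_smul' c χ := by
    funext f
    simp [symProj, tens, mul_sum, mul_left_comm]

def symmSubmodule (N : ℕ) : Submodule ℂ (QIdx N → ℂ) where
  carrier := {χ | SymmVec χ}
  add_mem' hχ hχ' σ f := by simp [hχ σ f, hχ' σ f]
  zero_mem' _ _ := rfl
  smul_mem' c χ hχ σ f := by simp [hχ σ f]

/-- if `|ψ⟩` is a nonzero symmetric `s`-qubit vector and
`|φ_1⟩, …, |φ_k⟩` are linearly independent symmetric `m`-qubit vectors, then the
projected vectors `P_N(|ψ⟩ ⊗ |φ_i⟩)` (with `N = s + m`) are linearly independent. -/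
theorem stmt8 (s m k : ℕ) (ψ : QIdx s → ℂ) (hψsym : SymmVec ψ) (hψ : ψ ≠ 0)
    (φ : Fin k → (QIdx m → ℂ)) (hφsym : ∀ i, SymmVec (φ i))
    (hφ : LinearIndependent ℂ φ) :
    LinearIndependent ℂ (fun i : Fin k => symProj (s + m) (tens ψ (φ i))) := by
  refine hφ.map (f := symProjTensLeft ψ) (Submodule.disjoint_def.mpr fun χ hχspan hχker => ?_)
  have hχ : SymmVec χ :=
    (Submodule.span_le (p := symmSubmodule m)).mpr (Set.range_subset_iff.mpr hφsym) hχspan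
  exact eq_zero_of_symProj_tens_eq_zero hψsym hψ hχ hχker
end

section
/- Let ρ^{T_S} be PSD on (ℂ²)^⊗N and symmetric on the subsystem S̄ (i.e., P_{S̄} ρ^{T_S} P_{S̄} = ρ^{T_S}). If ρ^{T_S} = Σ_i |ψ_i⟩⟨ψ_i| ⊗ |e_i⟩⟨e_i| is a separable decomposition across the bipartition (all qubits except A_N)|A_N with A_N ∈ S̄, then each vector |ψ_i⟩⊗|e_i⟩ satisfies the same symmetry, and consequently |ψ_i⟩ = |ψ̃_i⟩ ⊗ |e_i⟩^⊗(|S̄|−1) with |ψ̃_i⟩ in the Hilbert space of S. -/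
/-!
Let `P` be the symmetrizer on `S̄`. From `P τ P = τ` one gets `(1 - P) τ (1 - P) = 0`, and
expanding `τ = ∑ |vᵢ⟩⟨vᵢ|` this is `∑ |(1 - P) vᵢ⟩⟨(1 - P) vᵢ| = 0`, so `P vᵢ = vᵢ`. Hence each
`vᵢ = ψᵢ ⊗ eᵢ` is invariant under every permutation of `S̄`, in particular under the transposition
of a qubit `p ∈ S̄ \ {A_N}` with `A_N`, which reads `ψᵢ(g[p ↦ x]) eᵢ(g p) = ψᵢ(g) eᵢ(x)`.
Resetting the qubits of `S̄ \ {A_N}` one at a time to a value `b` with `eᵢ(b) ≠ 0` then factors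
`ψᵢ` as `ψ̃ᵢ ⊗ eᵢ^{⊗t}`.
-/

open scoped ComplexOrder Classical

/-- The permutation operator `V_σ` as a matrix: `(V_σ ψ) f = ψ (f ∘ σ)`. -/
def permMat {N : ℕ} (σ : Equiv.Perm (Fin N)) : Matrix (QIdx N) (QIdx N) ℂ :=
  Matrix.of fun f g => if g = f ∘ σ then 1 else 0

/-- The orthogonal projector onto the subspace of vectors symmetric in the qubits of
the subset `T` (average of the permutation operators moving only qubits of `T`). -/
noncomputable def symSubsetProj {N : ℕ} (T : Finset (Fin N)) :
    Matrix (QIdx N) (QIdx N) ℂ :=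
  ((T.card.factorial : ℂ)⁻¹) •
    ∑ σ : Equiv.Perm (Fin N), if (∀ i ∉ T, σ i = i) then permMat σ else 0

/-- Rank-one projector `|v⟩⟨v|`. -/
def outer {N : ℕ} (v : QIdx N → ℂ) : Matrix (QIdx N) (QIdx N) ℂ :=
  Matrix.of fun f g => v f * (starRingEnd ℂ) (v g)

/-- The last `t + 1` qubits of `s + t + 1` (the subset `S̄`, whose last qubit is `A_N`). -/
def lastT (s t : ℕ) : Finset (Fin (s + t + 1)) :=
  Finset.univ.filter fun i => s ≤ (i : ℕ)

open Matrix

section Outer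

variable {N : ℕ} {ι : Type*} [Fintype ι]

theorem mul_outer_mul_conjTranspose (M : Matrix (QIdx N) (QIdx N) ℂ) (v : QIdx N → ℂ) :
    M * outer v * Mᴴ = outer (M *ᵥ v) := by
  ext f g
  simp only [outer, mul_apply, conjTranspose_apply, mulVec, dotProduct, of_apply, map_sum,
    map_mul, Finset.mul_sum, Finset.sum_mul, Complex.star_def]
  exact Finset.sum_congr rfl fun h _ => Finset.sum_congr rfl fun k _ => by ring

theorem eq_zero_of_sum_outer_eq_zero (w : ι → QIdx N → ℂ) (h : ∑ i, outer (w i) = 0) (i : ι) :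
    w i = 0 := by
  funext f
  have hdiag : ∑ j, Complex.normSq (w j f) = 0 := by
    have := congrFun (congrFun h f) f
    simp only [Matrix.sum_apply, outer, of_apply, Complex.mul_conj, Matrix.zero_apply] at this
    exact_mod_cast this
  exact Complex.normSq_eq_zero.mp <|
    (Finset.sum_eq_zero_iff_of_nonneg fun j _ => Complex.normSq_nonneg _).mp hdiag i
      (Finset.mem_univ i)

theorem mulVec_eq_self_of_mul_sum_outer_mul {P : Matrix (QIdx N) (QIdx N) ℂ}
    (hidem : IsIdempotentElem P) (hherm : P.IsHermitian) (v : ι → QIdx N → ℂ)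
    (hinv : P * (∑ i, outer (v i)) * P = ∑ i, outer (v i)) (i : ι) : P *ᵥ v i = v i := by
  have hcompl : (1 - P) * (∑ i, outer (v i)) * (1 - P)ᴴ = 0 := by
    have hQP : (1 - P) * P = 0 := by rw [sub_mul, one_mul, hidem.eq, sub_self]
    have hPQ : P * (1 - P) = 0 := by rw [mul_sub, mul_one, hidem.eq, sub_self]
    rw [conjTranspose_sub, conjTranspose_one, hherm.eq]
    nth_rewrite 1 [← hinv]
    calc (1 - P) * (P * (∑ i, outer (v i)) * P) * (1 - P)
        = (1 - P) * P * (∑ i, outer (v i)) * (P * (1 - P)) := by noncomm_ring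
      _ = 0 := by rw [hQP, hPQ, Matrix.zero_mul, Matrix.zero_mul]
  rw [Finset.mul_sum, Finset.sum_mul] at hcompl
  simp only [mul_outer_mul_conjTranspose] at hcompl
  have := eq_zero_of_sum_outer_eq_zero _ hcompl i
  rwa [sub_mulVec, one_mulVec, sub_eq_zero, eq_comm] at this

end Outer

section SymSubsetProj

variable {N : ℕ}

theorem permMat_mulVec_apply (σ : Equiv.Perm (Fin N)) (v : QIdx N → ℂ) (f : QIdx N) :
    (permMat σ *ᵥ v) f = v (f ∘ σ) := by
  simp [permMat, mulVec, dotProduct]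

theorem permMat_mul (σ τ : Equiv.Perm (Fin N)) : permMat σ * permMat τ = permMat (σ * τ) := by
  ext f g
  simp only [permMat, mul_apply, of_apply, ite_mul, one_mul, zero_mul, Finset.sum_ite_eq',
    Finset.mem_univ, if_true]
  simp only [Equiv.Perm.coe_mul, Function.comp_assoc]
  exact if_congr Iff.rfl rfl rfl

theorem permMat_conjTranspose (σ : Equiv.Perm (Fin N)) : (permMat σ)ᴴ = permMat σ⁻¹ := by
  ext f g
  have hiff : f = g ∘ σ ↔ g = f ∘ ⇑σ⁻¹ := by
    constructor <;> rintro rfl <;> funext x <;> simp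
  simp only [permMat, conjTranspose_apply, of_apply, hiff]
  split_ifs <;> simp

def permsFixingCompl (T : Finset (Fin N)) : Subgroup (Equiv.Perm (Fin N)) where
  carrier := {σ | ∀ i ∉ T, σ i = i}
  mul_mem' hσ hτ i hi := by simp [hτ i hi, hσ i hi]
  one_mem' _ _ := rfl
  inv_mem' {σ} hσ i hi := by simpa using congrArg σ.symm (hσ i hi).symm

variable (T : Finset (Fin N))

theorem card_permsFixingCompl : Fintype.card (permsFixingCompl T) = T.card.factorial := by
  rw [← Fintype.card_coe T, ← Fintype.card_perm]
  exact Fintype.card_congr (Equiv.Perm.subtypeEquivSubtypePerm (· ∈ T)).symm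

theorem symSubsetProj_eq_sum :
    symSubsetProj T = (T.card.factorial : ℂ)⁻¹ • ∑ σ : permsFixingCompl T, permMat σ := by
  rw [symSubsetProj, ← Finset.sum_filter]
  congr 1
  refine Finset.sum_subtype _ (fun σ => ?_) _
  simp only [Finset.mem_filter, Finset.mem_univ, true_and]
  rfl

theorem permMat_mul_symSubsetProj {σ : Equiv.Perm (Fin N)} (hσ : σ ∈ permsFixingCompl T) :
    permMat σ * symSubsetProj T = symSubsetProj T := by
  rw [symSubsetProj_eq_sum, Matrix.mul_smul, Finset.mul_sum]
  simp only [permMat_mul]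
  congr 1
  exact Equiv.sum_comp (Equiv.mulLeft (⟨σ, hσ⟩ : permsFixingCompl T))
    fun τ : permsFixingCompl T => permMat (τ : Equiv.Perm (Fin N))

theorem isIdempotentElem_symSubsetProj : IsIdempotentElem (symSubsetProj T) := by
  have hfact : (T.card.factorial : ℂ) ≠ 0 := by exact_mod_cast T.card.factorial_ne_zero
  rw [IsIdempotentElem]
  nth_rewrite 1 [symSubsetProj_eq_sum]
  rw [Matrix.smul_mul, Finset.sum_mul,
    Finset.sum_congr rfl fun σ _ => permMat_mul_symSubsetProj T σ.2, Finset.sum_const,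
    Finset.card_univ, card_permsFixingCompl, ← Nat.cast_smul_eq_nsmul ℂ,
    smul_smul, inv_mul_cancel₀ hfact, one_smul]

theorem isHermitian_symSubsetProj : (symSubsetProj T).IsHermitian := by
  rw [IsHermitian, symSubsetProj_eq_sum, conjTranspose_smul, conjTranspose_sum]
  simp only [permMat_conjTranspose, star_inv₀, star_natCast]
  congr 1
  exact Equiv.sum_comp (Equiv.inv (permsFixingCompl T))
    fun τ : permsFixingCompl T => permMat (τ : Equiv.Perm (Fin N))

theorem mulVec_eq_self_of_symSubsetProj_mulVec {T : Finset (Fin N)} {σ : Equiv.Perm (Fin N)}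
    (hσ : σ ∈ permsFixingCompl T) {v : QIdx N → ℂ} (hv : symSubsetProj T *ᵥ v = v) :
    permMat σ *ᵥ v = v := by
  rw [← hv, mulVec_mulVec, permMat_mul_symSubsetProj T hσ]

theorem swap_last_mem_permsFixingCompl_lastT (s t : ℕ) (j : Fin t) :
    Equiv.swap (Fin.natAdd s j).castSucc (Fin.last (s + t)) ∈ permsFixingCompl (lastT s t) := by
  intro k hk
  simp only [lastT, Finset.mem_filter, Finset.mem_univ, true_and, not_le] at hk
  apply Equiv.swap_apply_of_ne_of_ne <;> intro h <;> have := congrArg Fin.val h <;>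
    simp only [Fin.castSucc_natAdd, Fin.val_natAdd, Fin.val_castSucc, Fin.val_last] at this <;>
    omega

end SymSubsetProj

theorem piecewise_mul_prod_eq_mul_pow {ι α R : Type*} [DecidableEq ι] [CommMonoid R]
    (ψ : (ι → α) → R) (e : α → R) (A : Finset ι)
    (hrel : ∀ p ∈ A, ∀ g x, ψ (Function.update g p x) * e (g p) = ψ g * e x)
    (b : α) (g : ι → α) :
    ψ (A.piecewise (fun _ => b) g) * ∏ p ∈ A, e (g p) = ψ g * e b ^ A.card := by
  induction A using Finset.induction_on with
  | empty => simp
  | @insert j A hj ih =>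
    have hrelA : ∀ p ∈ A, ∀ g x, ψ (Function.update g p x) * e (g p) = ψ g * e x :=
      fun p hp => hrel p (Finset.mem_insert_of_mem hp)
    have hstep := hrel j (Finset.mem_insert_self j A) (A.piecewise (fun _ => b) g) b
    rw [Finset.piecewise_eq_of_notMem _ _ _ hj] at hstep
    rw [Finset.piecewise_insert, Finset.prod_insert hj, Finset.card_insert_of_notMem hj,
      ← mul_assoc, hstep, mul_right_comm, ih hrelA, pow_succ, mul_assoc]

theorem piecewise_natAdd_eq_append {s t : ℕ} {α : Type*} (b : α) (g : Fin (s + t) → α) :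
    (Finset.univ.map (Fin.natAddEmb s)).piecewise (fun _ => b) g
      = Fin.append (fun i => g (Fin.castAdd t i)) (fun _ => b) := by
  funext k
  induction k using Fin.addCases with
  | left i =>
    rw [Fin.append_left, Finset.piecewise_eq_of_notMem]
    simp only [Finset.mem_map, Finset.mem_univ, true_and, Fin.natAddEmb_apply, not_exists]
    intro j hj
    have := congrArg Fin.val hj
    simp only [Fin.val_natAdd, Fin.val_castAdd] at this
    omega
  | right j => simp

theorem exists_eq_tens_prodVec {s t : ℕ} (ψ : QIdx (s + t) → ℂ) {e : Fin 2 → ℂ} (he : e ≠ 0)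
    (hrel : ∀ (j : Fin t) (g : QIdx (s + t)) (x : Fin 2),
      ψ (Function.update g (Fin.natAdd s j) x) * e (g (Fin.natAdd s j)) = ψ g * e x) :
    ∃ ψt : QIdx s → ℂ, ψ = tens ψt (prodVec fun _ : Fin t => e) := by
  obtain ⟨b, hb⟩ : ∃ b, e b ≠ 0 := Function.ne_iff.mp he
  refine ⟨fun h => ψ (Fin.append h fun _ => b) / e b ^ t, funext fun g => ?_⟩
  have key := piecewise_mul_prod_eq_mul_pow ψ e (Finset.univ.map (Fin.natAddEmb s))
    (by simpa using hrel) b g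
  rw [piecewise_natAdd_eq_append, Finset.prod_map, Finset.card_map, Finset.card_univ,
    Fintype.card_fin] at key
  simp only [tens, prodVec, Fin.natAddEmb_apply] at key ⊢
  field_simp
  exact key.symm

theorem snoc_comp_swap_last {n : ℕ} {α : Type*} (p : Fin n) (g : Fin n → α) (x : α) :
    (Fin.snoc g x : Fin (n + 1) → α) ∘ Equiv.swap p.castSucc (Fin.last n)
      = Fin.snoc (Function.update g p x) (g p) := by
  funext k
  induction k using Fin.lastCases with
  | last => simp
  | cast m =>
    by_cases hm : m = p
    · subst hm
      simp
    · have hne : m.castSucc ≠ p.castSucc := fun h => hm (Fin.castSucc_injective n h)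
      simp [Equiv.swap_apply_of_ne_of_ne hne (Fin.castSucc_lt_last m).ne, hm]

theorem tens_oneQ_snoc {n : ℕ} (ψ : QIdx n → ℂ) (e : Fin 2 → ℂ) (g : QIdx n) (x : Fin 2) :
    tens ψ (oneQ e) (Fin.snoc g x) = ψ g * e x := by
  change ψ (fun i => (Fin.snoc g x : QIdx (n + 1)) i.castSucc)
    * e ((Fin.snoc g x : QIdx (n + 1)) (Fin.last n)) = ψ g * e x
  simp

theorem update_mul_eq_mul_of_swap_invariant {n : ℕ} (ψ : QIdx n → ℂ) (e : Fin 2 → ℂ) (p : Fin n)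
    (hswap : permMat (Equiv.swap p.castSucc (Fin.last n)) *ᵥ tens ψ (oneQ e) = tens ψ (oneQ e))
    (g : QIdx n) (x : Fin 2) : ψ (Function.update g p x) * e (g p) = ψ g * e x := by
  have := congrFun hswap (Fin.snoc g x)
  rwa [permMat_mulVec_apply, snoc_comp_swap_last, tens_oneQ_snoc, tens_oneQ_snoc] at this

theorem stmt11_general (s t K : ℕ)
    (τ : Matrix (QIdx (s + t + 1)) (QIdx (s + t + 1)) ℂ)
    (ψ : Fin K → (QIdx (s + t) → ℂ)) (e : Fin K → (Fin 2 → ℂ))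
    (he : ∀ i, e i ≠ 0)
    (hsym : symSubsetProj (lastT s t) * τ * symSubsetProj (lastT s t) = τ)
    (hdec : τ = ∑ i : Fin K, outer (tens (ψ i) (oneQ (e i)))) :
    (∀ i, (symSubsetProj (lastT s t)).mulVec (tens (ψ i) (oneQ (e i)))
        = tens (ψ i) (oneQ (e i))) ∧
    (∀ i, ∃ ψt : QIdx s → ℂ, ψ i = tens ψt (prodVec fun _ : Fin t => e i)) := by
  subst hdec
  have hfixed := mulVec_eq_self_of_mul_sum_outer_mul (isIdempotentElem_symSubsetProj _)
    (isHermitian_symSubsetProj _) _ hsym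
  refine ⟨hfixed, fun i => exists_eq_tens_prodVec (ψ i) (he i) fun j => ?_⟩
  exact update_mul_eq_mul_of_swap_invariant (ψ i) (e i) _ <|
    mulVec_eq_self_of_symSubsetProj_mulVec (swap_last_mem_permsFixingCompl_lastT s t j) (hfixed i)

/-- let `τ = ρ^{T_S}` be PSD on `N = s + t + 1` qubits (`S` the first `s`
qubits, `S̄` the last `t + 1` qubits with last qubit `A_N`), symmetric on `S̄`
(`P_{S̄} τ P_{S̄} = τ`).  If `τ = Σ_i |ψ_i⟩⟨ψ_i| ⊗ |e_i⟩⟨e_i|` is a separable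
decomposition across (everything else)|`A_N`, then each `|ψ_i⟩ ⊗ |e_i⟩` is invariant
under `P_{S̄}`, and consequently `|ψ_i⟩ = |ψ̃_i⟩ ⊗ |e_i⟩^⊗t` with `|ψ̃_i⟩` on `S`. -/
theorem stmt11 (s t K : ℕ)
    (τ : Matrix (QIdx (s + t + 1)) (QIdx (s + t + 1)) ℂ)
    (ψ : Fin K → (QIdx (s + t) → ℂ)) (e : Fin K → (Fin 2 → ℂ))
    (he : ∀ i, e i ≠ 0)
    (hPSD : τ.PosSemidef)
    (hsym : symSubsetProj (lastT s t) * τ * symSubsetProj (lastT s t) = τ)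
    (hdec : τ = ∑ i : Fin K, outer (tens (ψ i) (oneQ (e i)))) :
    (∀ i, (symSubsetProj (lastT s t)).mulVec (tens (ψ i) (oneQ (e i)))
        = tens (ψ i) (oneQ (e i))) ∧
    (∀ i, ∃ ψt : QIdx s → ℂ, ψ i = tens ψt (prodVec fun _ : Fin t => e i)) :=
  stmt11_general s t K τ ψ e he hsym hdec
end

section
/- Let ρ be a PSD operator on ℂ^{d} ⊗ ℂ^{d} (d = N/2+1) with rank(ρ^{T_S}) = d²−1, invariant under the swap V (Vρ = ρ), and let |Ψ⟩ span ker(ρ^{T_S}). Then V|Ψ*⟩ = |Ψ⟩ (after suitable phase), the matrix M_Ψ of coefficients of |Ψ⟩ in a product basis is Hermitian, and |Ψ⟩ = Σ_l λ_l |ω_l*⟩⊗|ω_l⟩ with real λ_l and orthonormal |ω_l⟩. -/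
/-!
The antiunitary `J = conjSwap : |v⟩ ↦ V|v*⟩` acts on coefficient matrices as `M ↦ Mᴴ`. Swap invariance and
hermiticity of `ρ` make `ρ^{T_S}` commute with `J`, so `J` preserves the kernel of `ρ^{T_S}`.
On this complex line the `J`-fixed vectors `Ψ + JΨ` and `i(Ψ - JΨ)` cannot both vanish, so some
nonzero multiple `cΨ` is fixed by `J`: its coefficient matrix is Hermitian, and the spectral
theorem gives the decomposition `Σ_l λ_l |ω_l*⟩ ⊗ |ω_l⟩`.
-/

open scoped ComplexOrder

/-- Partial transposition over the first tensor factor of `ℂ^d ⊗ ℂ^d`. -/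
def pt1 {d : ℕ} (ρ : Matrix (Fin d × Fin d) (Fin d × Fin d) ℂ) :
    Matrix (Fin d × Fin d) (Fin d × Fin d) ℂ :=
  Matrix.of fun p q => ρ (q.1, p.2) (p.1, q.2)

open Matrix

section ConjSwap

variable {m R : Type*}

def conjSwap [Star R] (v : m × m → R) : m × m → R := fun p => star (v p.swap)

@[simp]
lemma conjSwap_apply [Star R] (v : m × m → R) (p : m × m) : conjSwap v p = star (v p.swap) := rfl

@[simp]
lemma conjSwap_conjSwap [InvolutiveStar R] (v : m × m → R) : conjSwap (conjSwap v) = v := by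
  ext p; simp

@[simp]
lemma conjSwap_zero [AddMonoid R] [StarAddMonoid R] : conjSwap (0 : m × m → R) = 0 := by
  ext p; simp

@[simp]
lemma conjSwap_add [AddMonoid R] [StarAddMonoid R] (v w : m × m → R) :
    conjSwap (v + w) = conjSwap v + conjSwap w := by
  ext p; simp

@[simp]
lemma conjSwap_sub [AddGroup R] [StarAddMonoid R] (v w : m × m → R) :
    conjSwap (v - w) = conjSwap v - conjSwap w := by
  ext p; simp

@[simp]
lemma conjSwap_smul [CommMonoid R] [StarMul R] (c : R) (v : m × m → R) :
    conjSwap (c • v) = star c • conjSwap v := by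
  ext p; simp

lemma mulVec_conjSwap [Fintype m] [CommSemiring R] [StarRing R]
    (A : Matrix (m × m) (m × m) R) (hA : ∀ p q, A p.swap q.swap = star (A p q))
    (v : m × m → R) : A *ᵥ conjSwap v = conjSwap (A *ᵥ v) := by
  ext p
  simp only [conjSwap_apply, mulVec, dotProduct, star_sum, star_mul']
  exact Fintype.sum_equiv (Equiv.prodComm m m) _ _ fun q => by simp [hA]

lemma exists_smul_conjSwap_eq_self {S : Submodule ℂ (m × m → ℂ)}
    (hS : ∀ v ∈ S, conjSwap v ∈ S) {Ψ : m × m → ℂ} (hΨS : Ψ ∈ S) (hΨ : Ψ ≠ 0)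
    (hspan : ∀ v ∈ S, ∃ c : ℂ, v = c • Ψ) :
    ∃ c : ℂ, c ≠ 0 ∧ conjSwap (c • Ψ) = c • Ψ := by
  set Φ₁ := Ψ + conjSwap Ψ
  set Φ₂ := Complex.I • (Ψ - conjSwap Ψ)
  have hΦ₁ : conjSwap Φ₁ = Φ₁ := by simp [Φ₁, add_comm]
  have hΦ₂ : conjSwap Φ₂ = Φ₂ := by
    simp only [Φ₂, conjSwap_smul, conjSwap_sub, conjSwap_conjSwap, Complex.star_def,
      Complex.conj_I, neg_smul, ← smul_neg, neg_sub]
  have hΨ_eq : (2 : ℂ) • Ψ = Φ₁ - Complex.I • Φ₂ := by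
    simp only [Φ₁, Φ₂, smul_smul, Complex.I_mul_I, neg_one_smul, sub_neg_eq_add, two_smul]
    abel
  obtain ⟨Φ, hΦS, hΦ0, hΦ⟩ : ∃ Φ ∈ S, Φ ≠ 0 ∧ conjSwap Φ = Φ := by
    by_cases h₁ : Φ₁ = 0
    · refine ⟨Φ₂, S.smul_mem _ (S.sub_mem hΨS (hS Ψ hΨS)), fun h₂ => hΨ ?_, hΦ₂⟩
      simpa [h₁, h₂] using hΨ_eq
    · exact ⟨Φ₁, S.add_mem hΨS (hS Ψ hΨS), h₁, hΦ₁⟩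
  obtain ⟨c, rfl⟩ := hspan Φ hΦS
  exact ⟨c, by rintro rfl; simp at hΦ0, hΦ⟩

end ConjSwap

lemma Matrix.IsHermitian.exists_orthonormal_sum_eq {n 𝕜 : Type*} [Fintype n] [DecidableEq n]
    [RCLike 𝕜] {M : Matrix n n 𝕜} (hM : M.IsHermitian) :
    ∃ (lam : n → ℝ) (ω : n → n → 𝕜),
      (∀ l l', ∑ x, star (ω l x) * ω l' x = if l = l' then 1 else 0) ∧
      ∀ i j, M i j = ∑ l, (lam l : 𝕜) * star (ω l i) * ω l j := by
  set U : Matrix n n 𝕜 := ↑hM.eigenvectorUnitary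
  refine ⟨hM.eigenvalues, fun l x => star (U x l), fun l l' => ?_, fun i j => ?_⟩
  · have hU := congrFun (congrFun (Unitary.coe_star_mul_self hM.eigenvectorUnitary) l') l
    simp only [mul_apply, one_apply, star_apply] at hU
    simp only [star_star, eq_comm (a := l), ← hU, mul_comm, U]
  · conv_lhs => rw [hM.spectral_theorem]
    simp [Unitary.conjStarAlgAut_apply, mul_apply, diagonal_apply, U, mul_comm]

lemma pt1_apply_swap_swap {d : ℕ} {ρ : Matrix (Fin d × Fin d) (Fin d × Fin d) ℂ}
    (hρ : ρ.IsHermitian) (hswap : ∀ i j x, ρ (i, j) x = ρ (j, i) x) (p q : Fin d × Fin d) :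
    pt1 ρ p.swap q.swap = star (pt1 ρ p q) := by
  have hswap' : ∀ x i j, ρ x (i, j) = ρ x (j, i) := fun x i j => by
    rw [← hρ.apply, hswap, hρ.apply]
  simp only [pt1, of_apply, Prod.fst_swap, Prod.snd_swap, hρ.apply]
  rw [hswap, hswap']

/-- let `ρ` be PSD on `ℂ^d ⊗ ℂ^d`, invariant under the swap (`Vρ = ρ`),
with `rank ρ^{T_S} = d² - 1` (i.e. `ker ρ^{T_S}` is spanned by a single vector `|Ψ⟩`).
Then, after a suitable phase, `V|Ψ*⟩ = |Ψ⟩` (the coefficient matrix `M_Ψ` is Hermitian)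
and `|Ψ⟩ = Σ_l λ_l |ω_l*⟩ ⊗ |ω_l⟩` with real `λ_l` and orthonormal `|ω_l⟩`. -/
theorem stmt14 (d : ℕ) (ρ : Matrix (Fin d × Fin d) (Fin d × Fin d) ℂ)
    (hPSD : ρ.PosSemidef)
    (hswap : ∀ i j x, ρ (i, j) x = ρ (j, i) x)
    (Ψ : Fin d × Fin d → ℂ) (hΨ : Ψ ≠ 0)
    (hker : (pt1 ρ).mulVec Ψ = 0)
    (hspan : ∀ v, (pt1 ρ).mulVec v = 0 → ∃ c : ℂ, v = c • Ψ) :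
    ∃ c : ℂ, c ≠ 0 ∧
      (∀ i j, c * Ψ (j, i) = (starRingEnd ℂ) (c * Ψ (i, j))) ∧
      ∃ (lam : Fin d → ℝ) (ω : Fin d → (Fin d → ℂ)),
        (∀ l m, (∑ x, (starRingEnd ℂ) (ω l x) * ω m x) = if l = m then 1 else 0) ∧
        ∀ i j, c * Ψ (i, j) = ∑ l, (lam l : ℂ) * (starRingEnd ℂ) (ω l i) * ω l j := by
  have hJ : ∀ v ∈ LinearMap.ker (pt1 ρ).mulVecLin, conjSwap v ∈ LinearMap.ker (pt1 ρ).mulVecLin :=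
    fun v hv => by
      simp only [LinearMap.mem_ker, mulVecLin_apply] at hv ⊢
      rw [mulVec_conjSwap _ (pt1_apply_swap_swap hPSD.isHermitian hswap), hv, conjSwap_zero]
  obtain ⟨c, hc0, hc⟩ := exists_smul_conjSwap_eq_self hJ hker hΨ hspan
  have hherm : ∀ i j, c * Ψ (j, i) = (starRingEnd ℂ) (c * Ψ (i, j)) := fun i j =>
    (congrFun hc (j, i)).symm
  have hM : (of fun i j => c * Ψ (i, j)).IsHermitian :=
    ext fun i j => (hherm j i).symm
  exact ⟨c, hc0, hherm, hM.exists_orthonormal_sum_eq⟩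
end

section
/- If a PPT state ρ on a multipartite Hilbert space H is not extremal in the convex set of PPT states, then there exists a PPT state σ ≠ ρ with range(σ) ⊆ range(ρ) and range(σ^{T_k}) ⊆ range(ρ^{T_k}) for every relevant partial transposition T_k; conversely, existence of such σ implies ρ is not extremal (one can find x > 0 with (1+x)ρ − xσ still PPT). -/
/-!
For positive semidefinite `A` and `B`, `range A ⊆ range B` (equivalently `ker B ⊆ ker A`) holds
exactly when `B - c A ⪰ 0` for some `c > 0`. Given the kernel inclusion, the quadratic form of `B`
is bounded below by compactness on the unit sphere of a complement of `ker B`, and both quadratic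
forms only see the component of a vector in that complement.

If `ρ = p ρ₁ + (1 - p) ρ₂`, then `ρ - p ρ₁ ⪰ 0` and likewise after each `T k`, so `ρ₁` (or `ρ₂`,
whichever differs from `ρ`) is the required `σ`. Conversely, given `σ`, the condition
`ρ - x σ ⪰ 0` and its analogues for the `T k ρ` hold for all small `x > 0`; then
`τ = (1 - x)⁻¹ (ρ - x σ)` is a PPT state and `ρ = x σ + (1 - x) τ` with `σ ≠ τ`.
-/

open scoped ComplexOrder

variable {n : Type} [Fintype n] [DecidableEq n]

/-- Membership in `D_PPT`: a state (PSD, trace one) all of whose relevant partial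
transpositions `T k` are PSD. -/
def IsPPTState {M : ℕ} (T : Fin M → (Matrix n n ℂ →ₗ[ℂ] Matrix n n ℂ))
    (ρ : Matrix n n ℂ) : Prop :=
  ρ.PosSemidef ∧ ρ.trace = 1 ∧ ∀ k, (T k ρ).PosSemidef

/-- Extremality in the convex set `D_PPT`. -/
def IsExtremalPPT {M : ℕ} (T : Fin M → (Matrix n n ℂ →ₗ[ℂ] Matrix n n ℂ))
    (ρ : Matrix n n ℂ) : Prop :=
  ∀ ρ₁ ρ₂ : Matrix n n ℂ, IsPPTState T ρ₁ → IsPPTState T ρ₂ →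
    ∀ p : ℝ, 0 < p → p < 1 → ρ = p • ρ₁ + (1 - p) • ρ₂ → ρ₁ = ρ₂

open Matrix LinearMap RCLike Topology

namespace LinearMap

variable {𝕜 E : Type*} [RCLike 𝕜] [NormedAddCommGroup E] [InnerProductSpace 𝕜 E]
  [FiniteDimensional 𝕜 E]

theorem IsSymmetric.range_le_range_iff {S T : E →ₗ[𝕜] E} (hS : S.IsSymmetric)
    (hT : T.IsSymmetric) : range S ≤ range T ↔ ker T ≤ ker S := by
  rw [← Submodule.orthogonal_le_orthogonal_iff, hS.orthogonal_range, hT.orthogonal_range]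

end LinearMap

namespace Matrix

variable {𝕜 m : Type*} [RCLike 𝕜] [Fintype m]

theorem IsHermitian.posSemidef_of_re_dotProduct_mulVec_nonneg {M : Matrix m m 𝕜}
    (hM : M.IsHermitian) (h : ∀ v, 0 ≤ re (star v ⬝ᵥ M *ᵥ v)) : M.PosSemidef :=
  .of_dotProduct_mulVec_nonneg hM fun v ↦
    RCLike.nonneg_iff.mpr ⟨h v, hM.im_star_dotProduct_mulVec_self v⟩

theorem IsHermitian.dotProduct_mulVec_add_of_mulVec_eq_zero {M : Matrix m m 𝕜}
    (hM : M.IsHermitian) {y : m → 𝕜} (hy : M *ᵥ y = 0) (z : m → 𝕜) :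
    star (y + z) ⬝ᵥ M *ᵥ (y + z) = star z ⬝ᵥ M *ᵥ z := by
  have hyz : star y ⬝ᵥ M *ᵥ z = 0 := by
    rw [dotProduct_mulVec, ← hM.eq, ← star_mulVec, hy, star_zero, zero_dotProduct]
  rw [mulVec_add, hy, zero_add, star_add, add_dotProduct, hyz, zero_add]

theorem re_dotProduct_mulVec_real_smul (M : Matrix m m 𝕜) (t : ℝ) (z : m → 𝕜) :
    re (star (t • z) ⬝ᵥ M *ᵥ (t • z)) = t ^ 2 * re (star z ⬝ᵥ M *ᵥ z) := by
  simp only [mulVec_smul, star_smul, star_trivial, dotProduct_smul, smul_dotProduct, smul_re]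
  ring

theorem continuous_re_dotProduct_mulVec (M : Matrix m m 𝕜) :
    Continuous fun z : m → 𝕜 ↦ re (star z ⬝ᵥ M *ᵥ z) := by
  fun_prop

theorem PosSemidef.re_dotProduct_mulVec_eq_zero_iff {A : Matrix m m 𝕜} (hA : A.PosSemidef)
    (v : m → 𝕜) : re (star v ⬝ᵥ A *ᵥ v) = 0 ↔ A *ᵥ v = 0 := by
  rw [← hA.dotProduct_mulVec_zero_iff]
  refine ⟨fun h ↦ RCLike.ext ?_ ?_, fun h ↦ by rw [h, map_zero]⟩
  · rw [h, map_zero]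
  · rw [hA.1.im_star_dotProduct_mulVec_self, map_zero]

variable [DecidableEq m]

theorem toEuclideanLin_eq_comp (A : Matrix m m 𝕜) :
    toEuclideanLin A = (WithLp.linearEquiv 2 𝕜 (m → 𝕜)).symm.toLinearMap ∘ₗ toLin' A ∘ₗ
      (WithLp.linearEquiv 2 𝕜 (m → 𝕜)).toLinearMap :=
  rfl

theorem range_toLin'_le_iff {A B : Matrix m m 𝕜} :
    range (toLin' A) ≤ range (toLin' B) ↔
      range (toEuclideanLin A) ≤ range (toEuclideanLin B) := by
  simp only [toEuclideanLin_eq_comp, range_comp, LinearEquiv.range, Submodule.map_top]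
  exact (Submodule.map_le_map_iff_of_injective (LinearEquiv.injective _) _ _).symm

theorem ker_toLin'_le_iff {A B : Matrix m m 𝕜} :
    ker (toLin' A) ≤ ker (toLin' B) ↔ ker (toEuclideanLin A) ≤ ker (toEuclideanLin B) := by
  rw [toEuclideanLin_eq_comp, toEuclideanLin_eq_comp, LinearEquiv.ker_comp, LinearEquiv.ker_comp,
    ker_comp, ker_comp]
  exact (Submodule.comap_le_comap_iff_of_surjective (LinearEquiv.surjective _)).symm

theorem IsHermitian.range_toLin'_le_iff_ker_le {A B : Matrix m m 𝕜} (hA : A.IsHermitian)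
    (hB : B.IsHermitian) :
    range (toLin' A) ≤ range (toLin' B) ↔ ker (toLin' B) ≤ ker (toLin' A) := by
  rw [range_toLin'_le_iff, ker_toLin'_le_iff]
  exact (isSymmetric_toEuclideanLin_iff.mpr hA).range_le_range_iff
    (isSymmetric_toEuclideanLin_iff.mpr hB)

theorem PosSemidef.re_dotProduct_mulVec_pos {B : Matrix m m 𝕜} (hB : B.PosSemidef)
    {K : Submodule 𝕜 (m → 𝕜)} (hK : Disjoint K (ker (toLin' B))) {z : m → 𝕜} (hz : z ∈ K)
    (hz0 : z ≠ 0) : 0 < re (star z ⬝ᵥ B *ᵥ z) :=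
  (hB.re_dotProduct_nonneg z).lt_of_ne fun h ↦
    hz0 (Submodule.disjoint_def.mp hK z hz ((hB.re_dotProduct_mulVec_eq_zero_iff z).mp h.symm))

theorem PosSemidef.exists_pos_smul_le_on_of_disjoint_ker {A B : Matrix m m 𝕜}
    (hA : A.PosSemidef) (hB : B.PosSemidef) {K : Submodule 𝕜 (m → 𝕜)}
    (hK : Disjoint K (ker (toLin' B))) :
    ∃ c : ℝ, 0 < c ∧ ∀ z ∈ K, c * re (star z ⬝ᵥ A *ᵥ z) ≤ re (star z ⬝ᵥ B *ᵥ z) := by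
  set qA := fun z : m → 𝕜 ↦ re (star z ⬝ᵥ A *ᵥ z)
  set qB := fun z : m → 𝕜 ↦ re (star z ⬝ᵥ B *ᵥ z)
  set S := Metric.sphere 0 1 ∩ (K : Set (m → 𝕜))
  have hqB : ∀ z ∈ S, 0 < qB z :=
    fun z hz ↦ hB.re_dotProduct_mulVec_pos hK hz.2 (ne_zero_of_mem_unit_sphere ⟨z, hz.1⟩)
  have hq : ∀ z ∈ S, 0 < qA z + qB z :=
    fun z hz ↦ add_pos_of_nonneg_of_pos (hA.re_dotProduct_nonneg z) (hqB z hz)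
  -- `qB / (qA + qB)` is defined and positive on `S`; its lower bound `c` gives `c * qA ≤ qB`.
  -- (`exists_forall_le'` also covers `S = ∅`, i.e. `K = ⊥`.)
  obtain ⟨c, hc, hcS⟩ :=
    ((isCompact_sphere 0 1).inter_right K.closed_of_finiteDimensional).exists_forall_le'
      (f := fun z ↦ qB z / (qA z + qB z))
      ((continuous_re_dotProduct_mulVec B).continuousOn.div
        ((continuous_re_dotProduct_mulVec A).add (continuous_re_dotProduct_mulVec B)).continuousOn
        fun z hz ↦ (hq z hz).ne')
      fun z hz ↦ div_pos (hqB z hz) (hq z hz)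
  have hcS' : ∀ u ∈ S, c * qA u ≤ qB u := fun u hu ↦ by
    have := (le_div_iff₀ (hq u hu)).mp (hcS u hu)
    nlinarith [hA.re_dotProduct_nonneg u, hB.re_dotProduct_nonneg u]
  refine ⟨c, hc, fun z hz ↦ ?_⟩
  rcases eq_or_ne z 0 with rfl | hz0
  · simp
  have hnz : 0 < ‖z‖ := norm_pos_iff.mpr hz0
  have hu : ‖z‖⁻¹ • z ∈ S := ⟨by simp [norm_smul, hnz.ne'], K.smul_of_tower_mem _ hz⟩
  have := hcS' _ hu
  simp only [qA, qB, re_dotProduct_mulVec_real_smul, mul_left_comm c] at this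
  exact le_of_mul_le_mul_left this (by positivity)

theorem PosSemidef.exists_pos_posSemidef_sub_smul_of_ker_le {A B : Matrix m m 𝕜}
    (hA : A.PosSemidef) (hB : B.PosSemidef) (h : ker (toLin' B) ≤ ker (toLin' A)) :
    ∃ c : ℝ, 0 < c ∧ (B - c • A).PosSemidef := by
  obtain ⟨K, hK⟩ := (ker (toLin' B)).exists_isCompl
  obtain ⟨c, hc, hcK⟩ := hA.exists_pos_smul_le_on_of_disjoint_ker hB hK.symm.disjoint
  refine ⟨c, hc, (hB.1.sub (hA.smul hc.le).1).posSemidef_of_re_dotProduct_mulVec_nonneg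
    fun v ↦ ?_⟩
  obtain ⟨y, hy, z, hz, rfl⟩ := Submodule.mem_sup.mp (hK.sup_eq_top ▸ Submodule.mem_top (x := v))
  have hAy : A *ᵥ y = 0 := h hy
  rw [sub_mulVec, dotProduct_sub, smul_mulVec, dotProduct_smul, map_sub, smul_re,
    hB.1.dotProduct_mulVec_add_of_mulVec_eq_zero hy z,
    hA.1.dotProduct_mulVec_add_of_mulVec_eq_zero hAy z]
  linarith [hcK z hz]

theorem PosSemidef.ker_toLin'_le_of_posSemidef_sub_smul {A B : Matrix m m 𝕜}
    (hA : A.PosSemidef) {c : ℝ} (hc : 0 < c) (h : (B - c • A).PosSemidef) :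
    ker (toLin' B) ≤ ker (toLin' A) := by
  intro v (hBv : B *ᵥ v = 0)
  have hle : c * re (star v ⬝ᵥ A *ᵥ v) ≤ 0 := by
    have := h.re_dotProduct_nonneg v
    rwa [sub_mulVec, hBv, smul_mulVec, dotProduct_sub, dotProduct_smul, dotProduct_zero,
      zero_sub, map_neg, smul_re, neg_nonneg] at this
  refine (hA.re_dotProduct_mulVec_eq_zero_iff v).mp (le_antisymm ?_ (hA.re_dotProduct_nonneg v))
  exact nonpos_of_mul_nonpos_right hle hc

theorem PosSemidef.range_toLin'_le_iff_exists_posSemidef_sub_smul {A B : Matrix m m 𝕜}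
    (hA : A.PosSemidef) (hB : B.PosSemidef) :
    range (toLin' A) ≤ range (toLin' B) ↔ ∃ c : ℝ, 0 < c ∧ (B - c • A).PosSemidef := by
  rw [hA.1.range_toLin'_le_iff_ker_le hB.1]
  exact ⟨hA.exists_pos_posSemidef_sub_smul_of_ker_le hB,
    fun ⟨c, hc, h⟩ ↦ hA.ker_toLin'_le_of_posSemidef_sub_smul hc h⟩

theorem PosSemidef.eventually_posSemidef_sub_smul {A B : Matrix m m 𝕜} (hA : A.PosSemidef)
    (hB : B.PosSemidef) (h : range (toLin' A) ≤ range (toLin' B)) :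
    ∀ᶠ c in 𝓝[>] (0 : ℝ), (B - c • A).PosSemidef := by
  obtain ⟨c₀, hc₀, h₀⟩ := (hA.range_toLin'_le_iff_exists_posSemidef_sub_smul hB).mp h
  filter_upwards [Ioo_mem_nhdsGT hc₀] with c hc
  rw [show B - c • A = (B - c₀ • A) + (c₀ - c) • A by rw [sub_smul]; abel]
  exact h₀.add (hA.smul (sub_nonneg.mpr hc.2.le))

end Matrix

section PPT

variable {ι : Type} [Fintype ι] {M : ℕ} {T : Fin M → (Matrix ι ι ℂ →ₗ[ℂ] Matrix ι ι ℂ)}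
  {ρ σ : Matrix ι ι ℂ}

theorem IsPPTState.range_le_of_eq_convex_comb [DecidableEq ι] {ρ₁ ρ₂ : Matrix ι ι ℂ}
    (hρ : IsPPTState T ρ) (h₁ : IsPPTState T ρ₁) (h₂ : IsPPTState T ρ₂) {p : ℝ}
    (hp0 : 0 < p) (hp1 : p < 1) (heq : ρ = p • ρ₁ + (1 - p) • ρ₂) :
    range (toLin' ρ₁) ≤ range (toLin' ρ) ∧
      ∀ k, range (toLin' (T k ρ₁)) ≤ range (toLin' (T k ρ)) := by
  have hp1' : 0 ≤ 1 - p := sub_nonneg.mpr hp1.le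
  constructor
  · refine (h₁.1.range_toLin'_le_iff_exists_posSemidef_sub_smul hρ.1).mpr ⟨p, hp0, ?_⟩
    rw [heq, add_sub_cancel_left]
    exact h₂.1.smul hp1'
  · intro k
    refine ((h₁.2.2 k).range_toLin'_le_iff_exists_posSemidef_sub_smul (hρ.2.2 k)).mpr
      ⟨p, hp0, ?_⟩
    rw [heq, map_add, map_smul_of_tower, map_smul_of_tower, add_sub_cancel_left]
    exact (h₂.2.2 k).smul hp1'

theorem IsPPTState.not_isExtremalPPT_of_posSemidef_sub_smul (hρ : IsPPTState T ρ)
    (hσ : IsPPTState T σ) (hne : σ ≠ ρ) {x : ℝ} (hx0 : 0 < x) (hx1 : x < 1)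
    (h : (ρ - x • σ).PosSemidef) (hk : ∀ k, (T k ρ - x • T k σ).PosSemidef) :
    ¬ IsExtremalPPT T ρ := by
  intro hext
  have hx1' : 1 - x ≠ 0 := (sub_pos.mpr hx1).ne'
  have hinv : 0 ≤ (1 - x)⁻¹ := inv_nonneg.mpr (sub_pos.mpr hx1).le
  set τ := (1 - x)⁻¹ • (ρ - x • σ)
  have hτ : IsPPTState T τ := by
    refine ⟨h.smul hinv, ?_, fun k ↦ ?_⟩
    · simp only [τ, trace_smul, trace_sub, hρ.2.1, hσ.2.1, Complex.real_smul]
      push_cast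
      rw [mul_one, inv_mul_cancel₀ (mod_cast hx1')]
    · rw [map_smul_of_tower, map_sub, map_smul_of_tower]
      exact (hk k).smul hinv
  have hρτ : ρ = x • σ + (1 - x) • τ := by
    rw [smul_inv_smul₀ hx1', add_sub_cancel]
  rw [← hext σ τ hσ hτ x hx0 hx1 hρτ, ← add_smul, add_sub_cancel, one_smul] at hρτ
  exact hne hρτ.symm

end PPT

theorem stmt15_general (M : ℕ) (T : Fin M → (Matrix n n ℂ →ₗ[ℂ] Matrix n n ℂ))
    (ρ : Matrix n n ℂ) (hρ : IsPPTState T ρ) :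
    ¬ IsExtremalPPT T ρ ↔
      ∃ σ : Matrix n n ℂ, IsPPTState T σ ∧ σ ≠ ρ ∧
        LinearMap.range (Matrix.toLin' σ) ≤ LinearMap.range (Matrix.toLin' ρ) ∧
        ∀ k, LinearMap.range (Matrix.toLin' (T k σ))
          ≤ LinearMap.range (Matrix.toLin' (T k ρ)) := by
  constructor
  · intro hρext
    simp only [IsExtremalPPT, not_forall] at hρext
    obtain ⟨ρ₁, ρ₂, h₁, h₂, p, hp0, hp1, heq, hne⟩ := hρext
    by_cases h₁ρ : ρ₁ = ρ
    · have heq' : ρ = (1 - p) • ρ₂ + (1 - (1 - p)) • ρ₁ := by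
        rw [sub_sub_cancel, add_comm, heq]
      exact ⟨ρ₂, h₂, fun h₂ρ ↦ hne (h₁ρ.trans h₂ρ.symm),
        hρ.range_le_of_eq_convex_comb h₂ h₁ (sub_pos.mpr hp1) (sub_lt_self 1 hp0) heq'⟩
    · exact ⟨ρ₁, h₁, h₁ρ, hρ.range_le_of_eq_convex_comb h₁ h₂ hp0 hp1 heq⟩
  · rintro ⟨σ, hσ, hne, hrange, hrangek⟩
    have hsmall := (hσ.1.eventually_posSemidef_sub_smul hρ.1 hrange).and <|
      Filter.eventually_all.mpr fun k ↦
        (hσ.2.2 k).eventually_posSemidef_sub_smul (hρ.2.2 k) (hrangek k)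
    obtain ⟨x, ⟨h, hk⟩, hx0, hx1⟩ := (hsmall.and (Ioo_mem_nhdsGT one_pos)).exists
    exact hρ.not_isExtremalPPT_of_posSemidef_sub_smul hσ hne hx0 hx1 h hk

/-- a PPT state `ρ` is not extremal in `D_PPT` iff there exists a PPT state
`σ ≠ ρ` with `range σ ⊆ range ρ` and `range σ^{T_k} ⊆ range ρ^{T_k}` for every `k`. -/
theorem stmt15 (M : ℕ) (T : Fin M → (Matrix n n ℂ →ₗ[ℂ] Matrix n n ℂ))
    (hTpsd : ∀ k (X : Matrix n n ℂ), X.PosSemidef → (T k X).PosSemidef)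
    (hTinv : ∀ k, Function.Involutive (T k))
    (ρ : Matrix n n ℂ) (hρ : IsPPTState T ρ) :
    ¬ IsExtremalPPT T ρ ↔
      ∃ σ : Matrix n n ℂ, IsPPTState T σ ∧ σ ≠ ρ ∧
        LinearMap.range (Matrix.toLin' σ) ≤ LinearMap.range (Matrix.toLin' ρ) ∧
        ∀ k, LinearMap.range (Matrix.toLin' (T k σ))
          ≤ LinearMap.range (Matrix.toLin' (T k ρ)) :=
  stmt15_general M T ρ hρ
end

section
/- A Hermitian matrix h satisfies the system P_k h^{T_k} P_k = h^{T_k} for all k = 0,…,M if and only if it satisfies the single fixed-point equation (P̂_M ∘ ⋯ ∘ P̂_1 ∘ P̂_0)(h) = h, where P̂_k(X) = [P_k X^{T_k} P_k]^{T_k}. -/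
open Matrix

variable {n : Type} [Fintype n] [DecidableEq n]

namespace Stmt17Aux

noncomputable def N (X : Matrix n n ℂ) : ℝ := (Matrix.trace (X * X.conjTranspose)).re

lemma trace_eq_sum (X : Matrix n n ℂ) :
    Matrix.trace (X * X.conjTranspose) = ∑ i, ∑ j, (Complex.normSq (X i j) : ℂ) := by
  simp [Matrix.trace, Matrix.mul_apply, Matrix.conjTranspose_apply, Matrix.diag,
    Complex.mul_conj]

lemma N_eq_sum (X : Matrix n n ℂ) :
    N X = ∑ i, ∑ j, Complex.normSq (X i j) := by
  rw [N, trace_eq_sum]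
  push_cast
  simp

lemma N_nonneg (X : Matrix n n ℂ) : 0 ≤ N X := by
  rw [N_eq_sum]
  exact Finset.sum_nonneg fun i _ => Finset.sum_nonneg fun j _ => Complex.normSq_nonneg _

lemma eq_zero_of_N_eq_zero (X : Matrix n n ℂ) (hX : N X = 0) : X = 0 := by
  rw [N_eq_sum] at hX
  ext i j
  have h1 : ∀ i ∈ (Finset.univ : Finset n), 0 ≤ ∑ j, Complex.normSq (X i j) := by
    intro i _; exact Finset.sum_nonneg fun j _ => Complex.normSq_nonneg _
  have h2 := (Finset.sum_eq_zero_iff_of_nonneg h1).mp hX i (Finset.mem_univ i)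
  have h3 : ∀ j ∈ (Finset.univ : Finset n), 0 ≤ Complex.normSq (X i j) := by
    intro j _; exact Complex.normSq_nonneg _
  have h4 := (Finset.sum_eq_zero_iff_of_nonneg h3).mp h2 j (Finset.mem_univ j)
  simpa using Complex.normSq_eq_zero.mp h4

lemma trace_pyth (P X : Matrix n n ℂ) (hP : P.IsHermitian) (hPi : P * P = P) :
    Matrix.trace ((P * X * P) * (P * X * P).conjTranspose)
      + Matrix.trace ((X - P * X * P) * (X - P * X * P).conjTranspose)
      = Matrix.trace (X * X.conjTranspose) := by
  have hPmul : ∀ A : Matrix n n ℂ, P * (P * A) = P * A := fun A => by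
    rw [← mul_assoc, hPi]
  have hY : (P * X * P).conjTranspose = P * (X.conjTranspose * P) := by
    rw [Matrix.conjTranspose_mul, Matrix.conjTranspose_mul, hP.eq]
  have c1 : Matrix.trace ((P * X * P) * (P * X * P).conjTranspose)
      = Matrix.trace (X * (P * (X.conjTranspose * P))) := by
    rw [hY]
    simp only [mul_assoc]
    rw [hPmul]
    rw [Matrix.trace_mul_comm]
    simp only [mul_assoc]
    rw [hPi]
  have c2 : Matrix.trace (X * (P * X * P).conjTranspose)
      = Matrix.trace (X * (P * (X.conjTranspose * P))) := by
    rw [hY]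
  have c3 : Matrix.trace ((P * X * P) * X.conjTranspose)
      = Matrix.trace (X * (P * (X.conjTranspose * P))) := by
    simp only [mul_assoc]
    rw [Matrix.trace_mul_comm]
    simp only [mul_assoc]
  simp only [Matrix.conjTranspose_sub, Matrix.sub_mul, Matrix.mul_sub, Matrix.trace_sub]
  rw [c1, c2, c3]
  ring

lemma pyth (P X : Matrix n n ℂ) (hP : P.IsHermitian) (hPi : P * P = P) :
    N (P * X * P) + N (X - P * X * P) = N X := by
  unfold N
  rw [← Complex.add_re, trace_pyth P X hP hPi]

lemma N_proj_le (P X : Matrix n n ℂ) (hP : P.IsHermitian) (hPi : P * P = P) :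
    N (P * X * P) ≤ N X := by
  have := pyth P X hP hPi
  have := N_nonneg (X - P * X * P)
  linarith

lemma proj_eq_of_N_eq (P X : Matrix n n ℂ) (hP : P.IsHermitian) (hPi : P * P = P)
    (hN : N (P * X * P) = N X) : P * X * P = X := by
  have hp := pyth P X hP hPi
  have h0 : N (X - P * X * P) = 0 := by linarith
  have hz : X - P * X * P = 0 := eq_zero_of_N_eq_zero _ h0
  exact (sub_eq_zero.mp hz).symm

end Stmt17Aux

/-- a Hermitian `h` satisfies the system `P_k h^{T_k} P_k = h^{T_k}`,
`k = 0, …, M`, iff it satisfies the single fixed-point equation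
`(P̂_M ∘ ⋯ ∘ P̂_1 ∘ P̂_0)(h) = h`, where `P̂_k(X) = [P_k X^{T_k} P_k]^{T_k}`.
Here the `P_k` are orthogonal projectors and the `T_k` are linear involutions
preserving Hermiticity and the Frobenius norm. -/
theorem stmt17 (M : ℕ)
    (P : Fin (M + 1) → Matrix n n ℂ)
    (hPherm : ∀ k, (P k).IsHermitian)
    (hPidem : ∀ k, P k * P k = P k)
    (T : Fin (M + 1) → (Matrix n n ℂ →ₗ[ℂ] Matrix n n ℂ))
    (hTinv : ∀ k, Function.Involutive (T k))
    (hTherm : ∀ k (X : Matrix n n ℂ), X.IsHermitian → (T k X).IsHermitian)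
    (hTnorm : ∀ k (X : Matrix n n ℂ), ((T k X) * (T k X).conjTranspose).trace = (X * X.conjTranspose).trace)
    (h : Matrix n n ℂ) (hherm : h.IsHermitian) :
    (∀ k, P k * T k h * P k = T k h) ↔
      (List.finRange (M + 1)).foldl (fun X k => T k (P k * T k X * P k)) h = h := by
  classical
  set g : Fin (M + 1) → Matrix n n ℂ → Matrix n n ℂ :=
    fun k X => T k (P k * T k X * P k) with hg
  have hNT : ∀ k X, Stmt17Aux.N (T k X) = Stmt17Aux.N X := fun k X => by
    unfold Stmt17Aux.N; rw [hTnorm k X]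
  have hNg_le : ∀ k X, Stmt17Aux.N (g k X) ≤ Stmt17Aux.N X := by
    intro k X
    calc Stmt17Aux.N (g k X) = Stmt17Aux.N (P k * T k X * P k) := hNT k _
      _ ≤ Stmt17Aux.N (T k X) := Stmt17Aux.N_proj_le _ _ (hPherm k) (hPidem k)
      _ = Stmt17Aux.N X := hNT k X
  have hNg_eq : ∀ k X, Stmt17Aux.N (g k X) = Stmt17Aux.N X → g k X = X := by
    intro k X hN
    have h1 : Stmt17Aux.N (P k * T k X * P k) = Stmt17Aux.N (T k X) :=
      calc Stmt17Aux.N (P k * T k X * P k)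
          = Stmt17Aux.N (T k (P k * T k X * P k)) := (hNT k _).symm
        _ = Stmt17Aux.N X := hN
        _ = Stmt17Aux.N (T k X) := (hNT k X).symm
    have h2 := Stmt17Aux.proj_eq_of_N_eq _ _ (hPherm k) (hPidem k) h1
    show T k (P k * T k X * P k) = X
    rw [h2, hTinv k X]
  have hfold_le : ∀ (l : List (Fin (M + 1))) (X : Matrix n n ℂ),
      Stmt17Aux.N (l.foldl (fun Y k => g k Y) X) ≤ Stmt17Aux.N X := by
    intro l
    induction l with
    | nil => intro X; simp
    | cons k l ih =>
      intro X
      simpa using (ih (g k X)).trans (hNg_le k X)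
  have key : ∀ (l : List (Fin (M + 1))) (X : Matrix n n ℂ),
      l.foldl (fun Y k => g k Y) X = X → ∀ k ∈ l, g k X = X := by
    intro l
    induction l with
    | nil => intro X _ k hk; simp at hk
    | cons k l ih =>
      intro X hfold j hj
      simp only [List.foldl_cons] at hfold
      have hle1 : Stmt17Aux.N X ≤ Stmt17Aux.N (g k X) := by
        conv_lhs => rw [← hfold]
        exact hfold_le l (g k X)
      have heq : Stmt17Aux.N (g k X) = Stmt17Aux.N X :=
        le_antisymm (hNg_le k X) hle1
      have hfix : g k X = X := hNg_eq k X heq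
      rw [hfix] at hfold
      rcases List.mem_cons.mp hj with rfl | hj'
      · exact hfix
      · exact ih X hfold j hj'
  constructor
  · intro hsys
    have hfix : ∀ k, g k h = h := by
      intro k
      show T k (P k * T k h * P k) = h
      rw [hsys k, hTinv k h]
    have : ∀ (l : List (Fin (M + 1))), l.foldl (fun Y k => g k Y) h = h := by
      intro l
      induction l with
      | nil => simp
      | cons k l ih => simp [hfix k, ih]
    exact this _
  · intro hfold k
    have hgk := key (List.finRange (M + 1)) h hfold k (List.mem_finRange k)
    have h2 : T k (T k (P k * T k h * P k)) = T k h := congrArg (T k) hgk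
    exact (hTinv k (P k * T k h * P k)).symm.trans h2
end
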